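/- arXiv:1310.1112 — 6 statements merged into one kernel-verified Lean document; each statement's English description precedes it below -/
import Mathlib

section
/- Let d = (d_1, …, d_n) be a graphic list and let h be an extreme point of P(d). Then the graph R on vertex set {1,…,n} whose edges are exactly those pairs {i,j} with h_{ij} ∉ {0,1} is a disjoint union of cycles of odd length; that is, every vertex of {1,…,n} is incident to either zero or exactly two such pairs, and every connected component of R containing an edge is an odd cycle. -/
open Finset

/-- The polytope `P(d)` of fractional realizations: symmetric arrays with zero
diagonal, off-diagonal entries in `[0,1]`, whose row sums equal the degrees. -/
def degreePolytope {n : ℕ} (d : Fin n → ℕ) : Set (Fin n → Fin n → ℝ) :=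
  {x | (∀ i j, x i j = x j i) ∧ (∀ i, x i i = 0) ∧
       (∀ i j, 0 ≤ x i j ∧ x i j ≤ 1) ∧
       (∀ j, ∑ i, x i j = d j)}

/-- `G` is a realization of the degree list `d`. -/
def IsRealization {n : ℕ} (d : Fin n → ℕ) (G : SimpleGraph (Fin n)) : Prop :=
  ∀ i, {j | G.Adj i j}.ncard = d i

/-- `d` is graphic: it is the degree sequence of a simple graph. -/
def Graphic {n : ℕ} (d : Fin n → ℕ) : Prop :=
  ∃ G : SimpleGraph (Fin n), IsRealization d G

/-- `d` is decisive: every extreme point of `P(d)` has all coordinates in `{0,1}`. -/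
def Decisive {n : ℕ} (d : Fin n → ℕ) : Prop :=
  ∀ x ∈ Set.extremePoints ℝ (degreePolytope d), ∀ i j, x i j = 0 ∨ x i j = 1

/-- The graph whose edges are the pairs with nonintegral label. -/
def nonIntegralGraph {n : ℕ} (h : Fin n → Fin n → ℝ) : SimpleGraph (Fin n) :=
  SimpleGraph.fromRel fun i j => h i j ∉ ({0, 1} : Set ℝ)

/-- A `(3,3)`-blossom in `G`. -/
def Has33Blossom {V : Type*} (G : SimpleGraph V) : Prop :=
  ∃ v1 v2 v3 w1 w2 w3 : V,
    [v1, v2, v3, w1, w2, w3].Pairwise (· ≠ ·) ∧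
    ((G.Adj v1 v2 ∧ ¬G.Adj v2 v3 ∧ G.Adj v3 v1 ∧ ¬G.Adj v1 w1 ∧
      G.Adj w1 w2 ∧ ¬G.Adj w2 w3 ∧ G.Adj w3 w1) ∨
     (¬G.Adj v1 v2 ∧ G.Adj v2 v3 ∧ ¬G.Adj v3 v1 ∧ G.Adj v1 w1 ∧
      ¬G.Adj w1 w2 ∧ G.Adj w2 w3 ∧ ¬G.Adj w3 w1))

/-- A `(k,ℓ)`-blossom in `G`: cycles `v`, `w` with connecting pair `v 0, w 0`,
with the `k + ℓ + 1` pairs alternately edges and non-edges (phase `b`). -/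
def HasKLBlossom {V : Type*} (G : SimpleGraph V) (k l : ℕ) : Prop :=
  ∃ (v : ZMod k → V) (w : ZMod l → V) (b : Bool),
    Function.Injective (Sum.elim v w) ∧
    (∀ i : ZMod k, G.Adj (v i) (v (i + 1)) ↔ (Even i.val ↔ b = true)) ∧
    (G.Adj (v 0) (w 0) ↔ b = false) ∧
    (∀ i : ZMod l, G.Adj (w i) (w (i + 1)) ↔ (Even i.val ↔ b = true))

/-- The 24 forbidden degree multisets of the family `B`. -/
def BDegSeqs : Set (Multiset ℕ) :=
  {{1,1,1,1,1,1}, {2,2,1,1,1,1}, {2,2,2,2,1,1}, {2,2,2,2,2,2},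
   {3,2,2,1,1,1}, {3,2,2,2,2,1}, {3,3,2,2,1,1}, {3,3,2,2,2,2},
   {3,3,3,2,2,1}, {3,3,3,3,1,1}, {3,3,3,3,2,2}, {3,3,3,3,3,3},
   {4,2,2,2,1,1}, {4,3,2,2,2,1}, {4,3,3,2,2,2}, {4,3,3,3,2,1},
   {4,3,3,3,3,2}, {4,4,2,2,2,2}, {4,4,3,3,2,2}, {4,4,3,3,3,1},
   {4,4,3,3,3,3}, {4,4,4,3,3,2}, {4,4,4,4,3,3}, {4,4,4,4,4,4}}

/-- `G` is `B`-free: no six vertices induce a subgraph whose degree multiset is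
one of the 24 forbidden degree sequences (equivalently, no induced subgraph is
isomorphic to a member of `B`, since `B` consists of all realizations of them). -/
def BFree {V : Type*} (G : SimpleGraph V) : Prop :=
  ∀ s : Finset V, s.card = 6 →
    (s.val.map fun v => {u | u ∈ s ∧ G.Adj v u}.ncard) ∉ BDegSeqs

/-- `A` is an independent set in `G`. -/
def IndepOn {V : Type*} (G : SimpleGraph V) (A : Set V) : Prop :=
  ∀ a ∈ A, ∀ b ∈ A, ¬G.Adj a b

/-- `B` is a clique in `G`. -/
def CliqueOn {V : Type*} (G : SimpleGraph V) (B : Set V) : Prop :=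
  ∀ a ∈ B, ∀ b ∈ B, a ≠ b → G.Adj a b

/-- `G` is a split graph. -/
def IsSplit {V : Type*} (G : SimpleGraph V) : Prop :=
  ∃ A B : Set V, A ∪ B = Set.univ ∧ Disjoint A B ∧ IndepOn G A ∧ CliqueOn G B

/-- Partition of the vertices into an independent set `V1`, a clique `V2`, and a set
`V3` each of whose vertices is adjacent to all of `V2` and none of `V1`. -/
def GoodPartition {V : Type*} (G : SimpleGraph V) (V1 V2 V3 : Set V) : Prop :=
  V1 ∪ V2 ∪ V3 = Set.univ ∧ Disjoint V1 V2 ∧ Disjoint V1 V3 ∧ Disjoint V2 V3 ∧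
  IndepOn G V1 ∧ CliqueOn G V2 ∧
  (∀ v ∈ V3, ∀ u ∈ V2, G.Adj v u) ∧ (∀ v ∈ V3, ∀ u ∈ V1, ¬G.Adj v u)

/-- `G` is decomposable. -/
def Decomposable {V : Type*} (G : SimpleGraph V) : Prop :=
  ∃ V1 V2 V3 : Set V, GoodPartition G V1 V2 V3 ∧ (V1 ∪ V2).Nonempty ∧ V3.Nonempty

def Indecomposable {V : Type*} (G : SimpleGraph V) : Prop := ¬Decomposable G

/-- The graph `U`, the unique realization of `(4,2,2,2,2,2)`:
vertices `u=0, a=1, b=2, c=3, d=4, e=5`, edges `ua, ub, uc, ud, ea, eb, cd`. -/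
def graphU : SimpleGraph (Fin 6) :=
  SimpleGraph.fromRel fun i j =>
    (i, j) ∈ [((0 : Fin 6), (1 : Fin 6)), (0,2), (0,3), (0,4), (5,1), (5,2), (3,4)]

/-- `K_2 + K_{1,m}`: disjoint union of an edge and a star with `m` leaves
(star center `Sum.inr 0`). -/
def graphK2PlusStar (m : ℕ) : SimpleGraph (Fin 2 ⊕ Fin (m + 1)) :=
  SimpleGraph.fromRel fun x y =>
    (x = Sum.inl 0 ∧ y = Sum.inl 1) ∨
    (x = Sum.inr 0 ∧ ∃ j : Fin (m + 1), j ≠ 0 ∧ y = Sum.inr j)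

/-- `(K_m + K_1) ∨ 2K_1`: the join of (`K_m` plus an isolated vertex)
with two nonadjacent vertices. -/
def graphKmK1Join (m : ℕ) : SimpleGraph (Fin (m + 1) ⊕ Fin 2) :=
  SimpleGraph.fromRel fun x y =>
    (∃ i j : Fin (m + 1), (i : ℕ) < m ∧ (j : ℕ) < m ∧ i ≠ j ∧
      x = Sum.inl i ∧ y = Sum.inl j) ∨
    (∃ i : Fin (m + 1), ∃ j : Fin 2, x = Sum.inl i ∧ y = Sum.inr j)

/-- The 5-cycle `C_5`. -/
def graphC5 : SimpleGraph (Fin 5) :=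
  SimpleGraph.fromRel fun i j =>
    (i, j) ∈ [((0 : Fin 5), (1 : Fin 5)), (1,2), (2,3), (3,4), (4,0)]

/-- The path `P_5` on five vertices. -/
def graphP5 : SimpleGraph (Fin 5) :=
  SimpleGraph.fromRel fun i j =>
    (i, j) ∈ [((0 : Fin 5), (1 : Fin 5)), (1,2), (2,3), (3,4)]

/-- The house graph: the complement of `P_5`. -/
def graphHouse : SimpleGraph (Fin 5) := graphP5ᶜ

/-- `K_2 + K_3`: disjoint union of an edge and a triangle. -/
def graphK2PlusK3 : SimpleGraph (Fin 5) :=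
  SimpleGraph.fromRel fun i j =>
    (i, j) ∈ [((0 : Fin 5), (1 : Fin 5)), (2,3), (3,4), (4,2)]

/-- The complete bipartite graph `K_{2,3}` with parts `{0,1}` and `{2,3,4}`. -/
def graphK23 : SimpleGraph (Fin 5) :=
  SimpleGraph.fromRel fun i j =>
    (i, j) ∈ [((0 : Fin 5), (2 : Fin 5)), (0,3), (0,4), (1,2), (1,3), (1,4)]

/-- Condition (iii) of the structure theorem for the part `V3`. -/
def SpecialPart {V : Type*} (G : SimpleGraph V) (V3 : Set V) : Prop :=
  IsSplit (G.induce V3) ∨ V3.ncard < 6 ∨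
  Nonempty (G.induce V3 ≃g graphU) ∨ Nonempty (G.induce V3 ≃g graphUᶜ) ∨
  (∃ m, 3 ≤ m ∧ Nonempty (G.induce V3 ≃g graphK2PlusStar m)) ∨
  (∃ m, 3 ≤ m ∧ Nonempty (G.induce V3 ≃g graphKmK1Join m))

/-- The structure described in Theorem 4(4). -/
def HasGoodStructure {V : Type*} (G : SimpleGraph V) : Prop :=
  ∃ V1 V2 V3 : Set V, GoodPartition G V1 V2 V3 ∧ SpecialPart G V3

/-! At an extreme point `x` of `P(d)` there is no nonzero edge weighting `f`, supported on the
fractional pairs, with all vertex sums zero: otherwise `x ± ε f` would both lie in `P(d)`.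
By a dimension count, the fractional graph `R` therefore has at most as many edges as
non-isolated vertices. Each column of `x` sums to an integer, so no vertex meets exactly one
fractional pair; with the degree-sum formula this forces every non-isolated vertex to have
degree exactly `2`, i.e. `R` is a union of cycles. An even cycle carries the weighting
`1, -1, 1, …, -1` along its edges, so every cycle is odd. -/

lemma eq_zero_of_mem_extremePoints_of_add_mem_of_sub_mem {E : Type*} [AddCommGroup E]
    [Module ℝ E] {A : Set E} {x y : E} (hx : x ∈ A.extremePoints ℝ) (hadd : x + y ∈ A)
    (hsub : x - y ∈ A) : y = 0 := by
  have hseg : x ∈ openSegment ℝ (x + y) (x - y) :=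
    ⟨1 / 2, 1 / 2, by norm_num, by norm_num, by norm_num, by module⟩
  simpa using hx.2 hadd hsub hseg

lemma Sym2.sum_pi_single_mk {V : Type*} [Fintype V] [DecidableEq V] {u w : V} (huw : u ≠ w)
    (j : V) :
    ∑ i, (Pi.single s(u, w) 1 : Sym2 V → ℝ) s(i, j) =
      (Pi.single u 1 : V → ℝ) j + (Pi.single w 1 : V → ℝ) j := by
  by_cases hju : j = u <;> by_cases hjw : j = w <;> simp_all [Pi.single_apply]

namespace SimpleGraph

variable {V : Type*} {G : SimpleGraph V}

lemma isCycles_of_card_edgeFinset_le [Fintype V] [DecidableRel G.Adj]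
    (hdeg : ∀ v, G.degree v ≠ 1) (hcard : #G.edgeFinset ≤ #{v | 0 < G.degree v}) :
    G.IsCycles := by
  set S : Finset V := {v | 0 < G.degree v}
  have hge : ∀ v ∈ S, 2 ≤ G.degree v := fun v hv => by
    have := (mem_filter.mp hv).2
    have := hdeg v
    omega
  have hsum : ∑ v ∈ S, G.degree v = 2 * #G.edgeFinset := by
    rw [← G.sum_degrees_eq_twice_card_edges]
    exact sum_subset (subset_univ S) fun v _ hv => by simpa [S] using hv
  have heq : ∀ v ∈ S, G.degree v = 2 := by
    refine fun v hv => ((sum_eq_sum_iff_of_le hge).mp ?_ v hv).symm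
    have := sum_le_sum hge
    simp only [sum_const, smul_eq_mul] at this ⊢
    omega
  rintro v ⟨w, hw⟩
  rw [← coe_neighborFinset, Set.ncard_coe_finset]
  exact heq v (mem_filter.mpr ⟨mem_univ v, G.degree_pos_iff_exists_adj v |>.mpr ⟨w, hw⟩⟩)

/-- The unsigned incidence matrix of `G` has linearly independent columns. -/
def IsZeroSumRigid [Fintype V] (G : SimpleGraph V) : Prop :=
  ∀ f : Sym2 V → ℝ, (∀ e, f e ≠ 0 → e ∈ G.edgeSet) → (∀ j, ∑ i, f s(i, j) = 0) → f = 0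

theorem IsZeroSumRigid.card_edgeFinset_le [Fintype V] [DecidableEq V] [DecidableRel G.Adj]
    (hG : G.IsZeroSumRigid) : #G.edgeFinset ≤ #{v | 0 < G.degree v} := by
  set S : Finset V := {v | 0 < G.degree v}
  let vertexSums : (Sym2 V → ℝ) →ₗ[ℝ] V → ℝ := LinearMap.pi fun j => ∑ i, LinearMap.proj s(i, j)
  let L := LinearMap.funLeft ℝ ℝ ((↑) : S → V) ∘ₗ vertexSums ∘ₗ
    Function.ExtendByZero.linearMap ℝ ((↑) : G.edgeSet → Sym2 V)
  have hL : Function.Injective L := by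
    refine (injective_iff_map_eq_zero L).mpr fun y hy => ?_
    set f := Function.extend ((↑) : G.edgeSet → Sym2 V) y 0
    have hf : ∀ e, f e ≠ 0 → e ∈ G.edgeSet := fun e hfe => by
      by_contra he
      exact hfe (Function.extend_apply' _ _ _ fun ⟨e', he'⟩ => he (he' ▸ e'.2))
    -- Off `S` the vertex sums vanish trivially, since no edge of `G` meets such a vertex.
    have hsum : ∀ j, ∑ i, f s(i, j) = 0 := by
      intro j
      by_cases hj : j ∈ S
      · simpa [L, vertexSums] using congrFun hy ⟨j, hj⟩
      · refine sum_eq_zero fun i _ => ?_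
        by_contra hfi
        have : G.Adj j i := (hf _ hfi).symm
        exact hj (mem_filter.mpr ⟨mem_univ j, G.degree_pos_iff_exists_adj j |>.mpr ⟨i, this⟩⟩)
    funext e
    rw [← Subtype.val_injective.extend_apply y 0 e]
    exact congrFun (hG f hf hsum) e
  simpa [Module.finrank_fintype_fun_eq_card, edgeFinset_card] using
    LinearMap.finrank_le_finrank_of_injective hL

namespace Walk

variable [DecidableEq V]

def alternatingWeight : ∀ {u v : V}, G.Walk u v → Sym2 V → ℝ
  | _, _, nil => 0
  | u, _, cons (v := w) _ p => Pi.single s(u, w) 1 - p.alternatingWeight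

lemma alternatingWeight_eq_zero_of_notMem_edges {u v : V} {p : G.Walk u v} {e : Sym2 V}
    (he : e ∉ p.edges) : p.alternatingWeight e = 0 := by
  induction p with
  | nil => rfl
  | cons hadj p ih =>
    rw [edges_cons, List.mem_cons, not_or] at he
    simp [alternatingWeight, he.1, ih he.2]

lemma sum_alternatingWeight [Fintype V] {u v : V} (p : G.Walk u v) (j : V) :
    ∑ i, p.alternatingWeight s(i, j) =
      (Pi.single u 1 : V → ℝ) j - (-1) ^ p.length * (Pi.single v 1 : V → ℝ) j := by
  induction p with
  | nil => simp [alternatingWeight]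
  | cons hadj p ih =>
    simp only [alternatingWeight, Pi.sub_apply, sum_sub_distrib, Sym2.sum_pi_single_mk hadj.ne,
      ih, length_cons, pow_succ]
    ring

lemma IsCycle.alternatingWeight_ne_zero {u : V} {c : G.Walk u u} (hc : c.IsCycle) :
    c.alternatingWeight ≠ 0 := by
  cases c with
  | nil => exact absurd hc not_isCycle_nil
  | @cons _ w _ hadj p =>
    intro h0
    have := congrFun h0 s(u, w)
    rw [alternatingWeight, Pi.sub_apply, Pi.single_eq_same,
      alternatingWeight_eq_zero_of_notMem_edges ((cons_isCycle_iff p hadj).mp hc).2] at this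
    norm_num at this

end Walk

theorem IsZeroSumRigid.not_even_length [Fintype V] [DecidableEq V] (hG : G.IsZeroSumRigid)
    {u : V} {c : G.Walk u u} (hc : c.IsCycle) : ¬Even c.length := fun heven =>
  hc.alternatingWeight_ne_zero <| hG _
    (fun _ he => c.edges_subset_edgeSet <| not_not.mp
      (mt Walk.alternatingWeight_eq_zero_of_notMem_edges he))
    (fun j => by rw [Walk.sum_alternatingWeight, heven.neg_one_pow, one_mul, sub_self])

end SimpleGraph

section degreePolytope

variable {n : ℕ} {d : Fin n → ℕ} {x : Fin n → Fin n → ℝ}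

lemma nonIntegralGraph_adj_iff (hx : x ∈ degreePolytope d) {i j : Fin n} :
    (nonIntegralGraph x).Adj i j ↔ x i j ∈ Set.Ioo 0 1 := by
  obtain ⟨hsymm, hdiag, hbound, -⟩ := hx
  have hfrac : x i j ∉ ({0, 1} : Set ℝ) ↔ x i j ∈ Set.Ioo 0 1 := by
    simp only [Set.mem_insert_iff, Set.mem_singleton_iff, Set.mem_Ioo]
    constructor
    · intro hne
      exact ⟨(hbound i j).1.lt_of_ne' (fun h => hne (.inl h)),
        (hbound i j).2.lt_of_ne (fun h => hne (.inr h))⟩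
    · rintro ⟨h0, h1⟩ (h | h) <;> linarith
  rw [nonIntegralGraph, SimpleGraph.fromRel_adj, ← hsymm j i, or_self, hsymm j i, hfrac]
  refine ⟨And.right, fun hij => ⟨?_, hij⟩⟩
  rintro rfl
  simp [hdiag] at hij

lemma eq_zero_or_eq_one_of_not_nonIntegralGraph_adj (hx : x ∈ degreePolytope d) {i j : Fin n}
    (hij : ¬(nonIntegralGraph x).Adj i j) : x i j = 0 ∨ x i j = 1 := by
  rw [nonIntegralGraph_adj_iff hx, Set.mem_Ioo, not_and_or, not_lt, not_lt] at hij
  have := hx.2.2.1 i j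
  rcases hij with h | h
  · exact .inl (le_antisymm h this.1)
  · exact .inr (le_antisymm this.2 h)

lemma degree_nonIntegralGraph_ne_one (hx : x ∈ degreePolytope d)
    [DecidableRel (nonIntegralGraph x).Adj] (v : Fin n) :
    (nonIntegralGraph x).degree v ≠ 1 := by
  intro hdeg
  obtain ⟨w, hw⟩ := card_eq_one.mp hdeg
  have hvw : (nonIntegralGraph x).Adj v w := by simp [← SimpleGraph.mem_neighborFinset, hw]
  let Z := (Int.castAddHom ℝ).range
  have hZ : ∀ i ∈ univ.erase w, x i v ∈ Z := fun i hi => by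
    have : ¬(nonIntegralGraph x).Adj i v := fun hiv => (ne_of_mem_erase hi) <| by
      simpa [hw] using (SimpleGraph.mem_neighborFinset _ _ _).mpr hiv.symm
    rcases eq_zero_or_eq_one_of_not_nonIntegralGraph_adj hx this with h | h <;> rw [h]
    exacts [Z.zero_mem, ⟨1, Int.cast_one⟩]
  have hwv : x w v = d v - ∑ i ∈ univ.erase w, x i v := by
    rw [← hx.2.2.2 v, ← add_sum_erase _ _ (mem_univ w), add_sub_cancel_right]
  obtain ⟨k, hk⟩ : x w v ∈ Z := hwv ▸ Z.sub_mem ⟨d v, by simp⟩ (Z.sum_mem hZ)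
  have := (nonIntegralGraph_adj_iff hx).mp hvw.symm
  rw [← hk, Int.coe_castAddHom, Set.mem_Ioo, Int.cast_pos, ← Int.cast_one, Int.cast_lt] at this
  omega

theorem isZeroSumRigid_nonIntegralGraph (hx : x ∈ (degreePolytope d).extremePoints ℝ) :
    (nonIntegralGraph x).IsZeroSumRigid := by
  intro f hf hsum
  let F : Fin n → Fin n → ℝ := fun i j => f s(i, j)
  have hbound : ∀ᶠ t in nhds (0 : ℝ), ∀ i j, x i j + t * F i j ∈ Set.Icc 0 1 := by
    simp only [Filter.eventually_all]
    intro i j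
    by_cases hfij : F i j = 0
    · simpa [hfij] using hx.1.2.2.1 i j
    · have hfrac := (nonIntegralGraph_adj_iff hx.1).mp (hf _ hfij)
      have hcont : Continuous fun t : ℝ => x i j + t * F i j := by fun_prop
      exact (hcont.tendsto' 0 _ (by simp) |>.eventually (isOpen_Ioo.mem_nhds hfrac)).mono
        fun _ h => Set.Ioo_subset_Icc_self h
  obtain ⟨ε, hε, hball⟩ := Metric.eventually_nhds_iff.mp hbound
  have hmem : ∀ t, |t| < ε → x + t • F ∈ degreePolytope d := by
    intro t ht
    obtain ⟨hsymm, hdiag, -, hrow⟩ := hx.1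
    refine ⟨fun i j => ?_, fun i => ?_, fun i j => hball (by simpa using ht) i j, fun j => ?_⟩
    · simp [F, hsymm i j, Sym2.eq_swap]
    · have : f s(i, i) = 0 := by_contra fun h => (nonIntegralGraph x).loopless.irrefl i (hf _ h)
      simp [F, hdiag, this]
    · simp [F, sum_add_distrib, ← mul_sum, hrow, hsum]
  have hF : (ε / 2) • F = 0 := eq_zero_of_mem_extremePoints_of_add_mem_of_sub_mem hx
    (hmem _ (by rw [abs_of_pos (by positivity)]; linarith))
    (by
      rw [sub_eq_add_neg, ← neg_smul]
      exact hmem _ (by rw [abs_neg, abs_of_pos (by positivity)]; linarith))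
  funext e
  induction e using Sym2.ind with
  | _ i j => simpa [F, hε.ne'] using congrFun (congrFun hF i) j

end degreePolytope

theorem extremePoint_nonintegral_edges_form_odd_cycles_general {n : ℕ} (d : Fin n → ℕ)
    (h : Fin n → Fin n → ℝ)
    (hh : h ∈ Set.extremePoints ℝ (degreePolytope d)) :
    (∀ v, {w | (nonIntegralGraph h).Adj v w}.ncard = 0 ∨
          {w | (nonIntegralGraph h).Adj v w}.ncard = 2) ∧
    (∀ v w, (nonIntegralGraph h).Adj v w →
      ∃ c : (nonIntegralGraph h).Walk v v, c.IsCycle ∧ Odd c.length ∧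
        ∀ u, (nonIntegralGraph h).Reachable v u ↔ u ∈ c.support) := by
  classical
  set R := nonIntegralGraph h
  have hrigid : R.IsZeroSumRigid := isZeroSumRigid_nonIntegralGraph hh
  have hcycles : R.IsCycles := SimpleGraph.isCycles_of_card_edgeFinset_le
    (degree_nonIntegralGraph_ne_one hh.1) hrigid.card_edgeFinset_le
  refine ⟨fun v => ?_, fun v w hvw => ?_⟩
  · rcases (R.neighborSet v).eq_empty_or_nonempty with hempty | hne
    · exact .inl ((Set.ncard_eq_zero (s := R.neighborSet v)).mpr hempty)
    · exact .inr (hcycles hne)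
  · obtain ⟨c, hc, hverts⟩ :=
      hcycles.exists_cycle_toSubgraph_verts_eq_connectedComponentSupp
        (c := R.connectedComponentMk v) rfl ⟨w, hvw⟩
    refine ⟨c, hc, Nat.not_even_iff_odd.mp (hrigid.not_even_length hc), fun u => ?_⟩
    rw [← c.mem_verts_toSubgraph, hverts, SimpleGraph.ConnectedComponent.mem_supp_iff,
      SimpleGraph.ConnectedComponent.eq]
    exact SimpleGraph.reachable_comm

/-- at an extreme point of `P(d)`, the nonintegrally-labeled pairs
form vertex-disjoint odd cycles: every vertex is incident to zero or exactly two
such pairs, and every connected component containing an edge is an odd cycle. -/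
theorem extremePoint_nonintegral_edges_form_odd_cycles {n : ℕ} (d : Fin n → ℕ)
    (hd : Graphic d) (h : Fin n → Fin n → ℝ)
    (hh : h ∈ Set.extremePoints ℝ (degreePolytope d)) :
    (∀ v, {w | (nonIntegralGraph h).Adj v w}.ncard = 0 ∨
          {w | (nonIntegralGraph h).Adj v w}.ncard = 2) ∧
    (∀ v w, (nonIntegralGraph h).Adj v w →
      ∃ c : (nonIntegralGraph h).Walk v v, c.IsCycle ∧ Odd c.length ∧
        ∀ u, (nonIntegralGraph h).Reachable v u ↔ u ∈ c.support) :=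
  extremePoint_nonintegral_edges_form_odd_cycles_general d h hh
end

section
/- Let d = (d_1, …, d_n) be a graphic list and let g be a point of P(d) such that the graph on vertex set {1,…,n} whose edges are the pairs {i,j} with g_{ij} ∉ {0,1} is a disjoint union of pairwise vertex-disjoint odd cycles (every vertex is incident to zero or exactly two such pairs, and every component with an edge is an odd cycle). Then g is an extreme point of P(d). -/
open Finset

/-! If `g` lies in the open segment between two points `x`, `y` of `P(d)`, then `x` and `y`
agree with `g` on every integral coordinate, since `0` and `1` are extreme points of `[0, 1]`.
So `x - y` is a symmetric weighting of the odd cycles with zero sum at every vertex. At a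
vertex of degree two the weights of its two edges are opposite, so they alternate in sign
around each cycle, and on a cycle of odd length this forces them to vanish. -/

namespace SimpleGraph

variable {V : Type*} {G : SimpleGraph V} {f : V → V → ℝ}

lemma neighborSet_eq_pair_of_ncard_le_two [Finite V] {u p q : V}
    (hdeg : (G.neighborSet u).ncard ≤ 2) (hp : G.Adj u p) (hq : G.Adj u q) (hpq : p ≠ q) :
    G.neighborSet u = {p, q} :=
  (Set.eq_of_subset_of_ncard_le (Set.insert_subset hp (Set.singleton_subset_iff.2 hq))
    (hdeg.trans (Set.ncard_pair hpq).ge)).symm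

structure IsZeroSumWeighting [Fintype V] (G : SimpleGraph V) (f : V → V → ℝ) : Prop where
  symm : ∀ u v, f u v = f v u
  eq_zero_of_not_adj : ∀ u v, ¬G.Adj u v → f u v = 0
  sum_eq_zero : ∀ v, ∑ u, f u v = 0

namespace IsZeroSumWeighting

variable [Fintype V]

lemma apply_add_apply_eq_zero (hf : G.IsZeroSumWeighting f)
    (hdeg : ∀ v, (G.neighborSet v).ncard ≤ 2) {u p q : V}
    (hp : G.Adj p u) (hq : G.Adj q u) (hpq : p ≠ q) : f p u + f q u = 0 := by
  classical
  have hN := neighborSet_eq_pair_of_ncard_le_two (hdeg u) hp.symm hq.symm hpq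
  rw [← Finset.sum_pair (f := (f · u)) hpq, ← hf.sum_eq_zero u]
  refine Finset.sum_subset (Finset.subset_univ _) fun r _ hr =>
    hf.eq_zero_of_not_adj r u fun hru => hr ?_
  have hr' : r ∈ G.neighborSet u := hru.symm
  simpa [hN] using hr'

lemma apply_getVert_eq_neg_one_pow_mul (hf : G.IsZeroSumWeighting f)
    (hdeg : ∀ v, (G.neighborSet v).ncard ≤ 2) {v : V} {c : G.Walk v v} (hc : c.IsCycle) :
    ∀ k < c.length, f (c.getVert k) (c.getVert (k + 1)) = (-1) ^ k * f v c.snd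
  | 0, _ => by simp
  | k + 1, hk => by
    have hbal := hf.apply_add_apply_eq_zero hdeg
      (c.adj_getVert_succ (i := k) (by omega)) (c.adj_getVert_succ (i := k + 1) hk).symm
      (hc.getVert_sub_one_ne_getVert_add_one (i := k + 1) hk.le)
    have ih := hf.apply_getVert_eq_neg_one_pow_mul hdeg hc k (by omega)
    rw [hf.symm _ (c.getVert (k + 1 + 1)), pow_succ]
    linarith

lemma apply_snd_eq_zero_of_odd (hf : G.IsZeroSumWeighting f)
    (hdeg : ∀ v, (G.neighborSet v).ncard ≤ 2) {v : V} {c : G.Walk v v} (hc : c.IsCycle)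
    (hodd : Odd c.length) : f v c.snd = 0 := by
  have h3 := hc.three_le_length
  have hbal := hf.apply_add_apply_eq_zero hdeg
    (c.adj_snd hc.not_nil).symm (c.adj_penultimate hc.not_nil) hc.snd_ne_penultimate
  have hround := hf.apply_getVert_eq_neg_one_pow_mul hdeg hc (c.length - 1) (by omega)
  rw [Nat.sub_add_cancel (by omega), c.getVert_length,
    (Nat.Odd.sub_odd hodd odd_one).neg_one_pow, one_mul] at hround
  rw [hf.symm c.snd] at hbal
  linarith

lemma eq_zero_of_forall_adj_odd_cycle (hf : G.IsZeroSumWeighting f)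
    (hdeg : ∀ v, (G.neighborSet v).ncard ≤ 2)
    (hcyc : ∀ v w, G.Adj v w → ∃ c : G.Walk v v, c.IsCycle ∧ Odd c.length) :
    f = 0 := by
  funext v w
  by_cases hvw : G.Adj v w
  · obtain ⟨c, hc, hodd⟩ := hcyc v w hvw
    have hw : w ∈ G.neighborSet v := hvw
    rw [neighborSet_eq_pair_of_ncard_le_two (hdeg v) (c.adj_snd hc.not_nil)
      (c.reverse.adj_snd hc.reverse.not_nil) (c.snd_reverse ▸ hc.snd_ne_penultimate)] at hw
    rcases hw with rfl | rfl
    · exact hf.apply_snd_eq_zero_of_odd hdeg hc hodd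
    · exact hf.apply_snd_eq_zero_of_odd hdeg hc.reverse (c.length_reverse ▸ hodd)
  · exact hf.eq_zero_of_not_adj v w hvw

end IsZeroSumWeighting

end SimpleGraph

lemma apply_mem_openSegment {ι κ : Type*} {x y g : ι → κ → ℝ} (hg : g ∈ openSegment ℝ x y)
    (i : ι) (j : κ) : g i j ∈ openSegment ℝ (x i j) (y i j) := by
  obtain ⟨a, b, ha, hb, hab, rfl⟩ := hg
  exact ⟨a, b, ha, hb, hab, rfl⟩

lemma eq_of_not_adj_nonIntegralGraph {n : ℕ} {d : Fin n → ℕ} {x y g : Fin n → Fin n → ℝ}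
    (hx : x ∈ degreePolytope d) (hy : y ∈ degreePolytope d) (hg : g ∈ openSegment ℝ x y)
    {i j : Fin n} (hij : ¬(nonIntegralGraph g).Adj i j) : x i j = y i j := by
  by_cases hii : i = j
  · subst hii
    rw [hx.2.1, hy.2.1]
  have hgij : g i j ∈ Set.extremePoints ℝ (Set.Icc 0 1) := by
    rw [Set.extremePoints_Icc zero_le_one]
    simp only [nonIntegralGraph, SimpleGraph.fromRel_adj, not_and, not_or, not_not] at hij
    exact (hij hii).1
  obtain ⟨hxg, hyg⟩ := (mem_extremePoints.1 hgij).2 _ (hx.2.2.1 i j) _ (hy.2.2.1 i j)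
    (apply_mem_openSegment hg i j)
  rw [hxg, hyg]

theorem point_with_odd_cycles_is_extreme_general {n : ℕ} (d : Fin n → ℕ)
    (g : Fin n → Fin n → ℝ) (hg : g ∈ degreePolytope d)
    (hdeg : ∀ v, {w | (nonIntegralGraph g).Adj v w}.ncard = 0 ∨
                 {w | (nonIntegralGraph g).Adj v w}.ncard = 2)
    (hcyc : ∀ v w, (nonIntegralGraph g).Adj v w →
      ∃ c : (nonIntegralGraph g).Walk v v, c.IsCycle ∧ Odd c.length ∧
        ∀ u, (nonIntegralGraph g).Reachable v u ↔ u ∈ c.support) :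
    g ∈ Set.extremePoints ℝ (degreePolytope d) := by
  refine ⟨hg, fun x hx y hy hgxy => ?_⟩
  have hxy : x - y = 0 :=
    SimpleGraph.IsZeroSumWeighting.eq_zero_of_forall_adj_odd_cycle (G := nonIntegralGraph g)
      { symm := fun i j => by simp only [Pi.sub_apply, hx.1 i j, hy.1 i j]
        eq_zero_of_not_adj := fun i j hij =>
          sub_eq_zero.2 (eq_of_not_adj_nonIntegralGraph hx hy hgxy hij)
        sum_eq_zero := fun j => by
          simp only [Pi.sub_apply, Finset.sum_sub_distrib, hx.2.2.2, hy.2.2.2, sub_self] }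
      (fun v => (hdeg v).elim (fun h => h.trans_le zero_le_two) (·.le))
      (fun v w hvw => (hcyc v w hvw).imp fun _ hc => ⟨hc.1, hc.2.1⟩)
  rw [sub_eq_zero] at hxy
  subst hxy
  rw [openSegment_same] at hgxy
  exact hgxy.symm

/-- a point of `P(d)` whose nonintegrally-labeled pairs form
vertex-disjoint odd cycles is an extreme point of `P(d)`. -/
theorem point_with_odd_cycles_is_extreme {n : ℕ} (d : Fin n → ℕ)
    (hd : Graphic d) (g : Fin n → Fin n → ℝ) (hg : g ∈ degreePolytope d)
    (hdeg : ∀ v, {w | (nonIntegralGraph g).Adj v w}.ncard = 0 ∨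
                 {w | (nonIntegralGraph g).Adj v w}.ncard = 2)
    (hcyc : ∀ v w, (nonIntegralGraph g).Adj v w →
      ∃ c : (nonIntegralGraph g).Walk v v, c.IsCycle ∧ Odd c.length ∧
        ∀ u, (nonIntegralGraph g).Reachable v u ↔ u ∈ c.support) :
    g ∈ Set.extremePoints ℝ (degreePolytope d) :=
  point_with_odd_cycles_is_extreme_general d g hg hdeg hcyc
end

section
/- The class of decisive graphs is hereditary: if G is a decisive simple graph (i.e., the degree sequence of G is a decisive sequence) and H is an induced subgraph of G, then H is decisive. -/
open Finset

/-!
Extend a point `x` of `P(d_H)` to `G` by keeping `x` on the pairs inside the copy of `H` and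
putting the adjacency matrix of `G` everywhere else; the degree of a vertex of `H` in `G` is its
degree in `H` plus its number of neighbours outside, so the extension lies in `P(d_G)`. Any open
segment of `P(d_G)` through the extension is constant on the outside entries, which are `0` or
`1`, so it restricts to an open segment of `P(d_H)` through `x`. Hence extreme points extend to
extreme points, and integrality of the latter passes back to `x`.
-/

theorem Fintype.sum_eq_sum_comp_add_sum_compl_map {α β M : Type*} [Fintype α] [Fintype β]
    [DecidableEq β] [AddCommMonoid M] (f : α ↪ β) (w : β → M) :
    ∑ i, w i = ∑ a, w (f a) + ∑ i ∈ (univ.map f)ᶜ, w i := by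
  rw [← Finset.sum_add_sum_compl (univ.map f), Finset.sum_map]

theorem Function.forall₂_of_comp_of_notMem_range {α β : Type*} (f : α → β) {P : β → β → Prop}
    (hmap : ∀ a b, P (f a) (f b)) (hout : ∀ i j, i ∉ Set.range f ∨ j ∉ Set.range f → P i j)
    (i j : β) : P i j := by
  by_cases hi : i ∈ Set.range f
  · by_cases hj : j ∈ Set.range f
    · obtain ⟨a, rfl⟩ := hi
      obtain ⟨b, rfl⟩ := hj
      exact hmap a b
    · exact hout i j (.inr hj)
  · exact hout i j (.inl hi)

namespace Matrix

variable {𝕜 α l m n o : Type*} [Semiring 𝕜] [PartialOrder 𝕜] [AddCommMonoid α] [Module 𝕜 α]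
  {A B C : Matrix m n α}

theorem apply_mem_openSegment (h : A ∈ openSegment 𝕜 B C) (i : m) (j : n) :
    A i j ∈ openSegment 𝕜 (B i j) (C i j) := by
  obtain ⟨s, t, hs, ht, hst, rfl⟩ := h
  exact ⟨s, t, hs, ht, hst, rfl⟩

theorem submatrix_mem_openSegment (h : A ∈ openSegment 𝕜 B C) (r : l → m) (c : o → n) :
    A.submatrix r c ∈ openSegment 𝕜 (B.submatrix r c) (C.submatrix r c) := by
  obtain ⟨s, t, hs, ht, hst, rfl⟩ := h
  exact ⟨s, t, hs, ht, hst, rfl⟩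

end Matrix

theorem eq_of_mem_openSegment_of_mem_Icc {a b c : ℝ} (ha : a ∈ Set.Icc 0 1)
    (hb : b ∈ Set.Icc 0 1) (hc : c = 0 ∨ c = 1) (h : c ∈ openSegment ℝ a b) : a = c := by
  have hc' : c ∈ Set.extremePoints ℝ (Set.Icc 0 1) := by
    rw [Set.extremePoints_Icc zero_le_one]
    exact hc
  exact (mem_extremePoints_iff_left.1 hc').2 a ha b hb h

namespace SimpleGraph

section Fintype

variable {V α : Type*} [Fintype V] {G : SimpleGraph V} [DecidableRel G.Adj]

theorem ncard_setOf_adj (v : V) : {w | G.Adj v w}.ncard = G.degree v := by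
  rw [Set.ncard_eq_toFinset_card']
  rfl

theorem sum_adjMatrix_apply_left [NonAssocSemiring α] (v : V) :
    ∑ u, G.adjMatrix α u v = G.degree v := by
  simp [degree_eq_sum_if_adj, G.adj_comm]

end Fintype

namespace Embedding

section Extension

variable {V W α : Type*} {G : SimpleGraph V} {H : SimpleGraph W} [DecidableRel G.Adj]
  (f : H ↪g G)

noncomputable def extendByAdjMatrix [Zero α] [One α] (x : Matrix W W α) : Matrix V V α :=
  Function.curry (Function.extend (Prod.map f f) (Function.uncurry x)
    (Function.uncurry (G.adjMatrix α)))

variable [Zero α] [One α] (x : Matrix W W α)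

theorem extendByAdjMatrix_apply_apply (a b : W) : f.extendByAdjMatrix x (f a) (f b) = x a b :=
  (f.injective.prodMap f.injective).extend_apply _ _ (a, b)

theorem submatrix_extendByAdjMatrix : (f.extendByAdjMatrix x).submatrix f f = x :=
  funext₂ (f.extendByAdjMatrix_apply_apply x)

theorem extendByAdjMatrix_apply_of_notMem_range ⦃i j : V⦄
    (h : i ∉ Set.range f ∨ j ∉ Set.range f) :
    f.extendByAdjMatrix x i j = G.adjMatrix α i j := by
  refine Function.extend_apply' _ _ _ ?_
  rintro ⟨⟨a, b⟩, hab⟩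
  simp only [Prod.map, Prod.mk.injEq] at hab
  rcases h with h | h
  · exact h ⟨a, hab.1⟩
  · exact h ⟨b, hab.2⟩

end Extension

theorem degree_add_sum_adjMatrix_compl_map {V W α : Type*} [Fintype V] [Fintype W]
    [DecidableEq V] [NonAssocSemiring α] {G : SimpleGraph V} {H : SimpleGraph W}
    [DecidableRel G.Adj] [DecidableRel H.Adj] (f : H ↪g G) (b : W) :
    H.degree b + ∑ i ∈ (univ.map f.toEmbedding)ᶜ, G.adjMatrix α i (f b) =
      G.degree (f b) := by
  rw [← sum_adjMatrix_apply_left, ← sum_adjMatrix_apply_left,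
    Fintype.sum_eq_sum_comp_add_sum_compl_map f.toEmbedding]
  simp

section DegreePolytope

variable {n m : ℕ} {G : SimpleGraph (Fin n)} {H : SimpleGraph (Fin m)} [DecidableRel G.Adj]
  (f : H ↪g G)

theorem apply_eq_adjMatrix_of_extendByAdjMatrix_mem_openSegment {x : Matrix (Fin m) (Fin m) ℝ}
    {y₁ y₂ : Matrix (Fin n) (Fin n) ℝ} (hy₁ : y₁ ∈ degreePolytope fun i => G.degree i)
    (hy₂ : y₂ ∈ degreePolytope fun i => G.degree i)
    (hy : f.extendByAdjMatrix x ∈ openSegment ℝ y₁ y₂) {i j : Fin n}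
    (hij : i ∉ Set.range f ∨ j ∉ Set.range f) : y₁ i j = G.adjMatrix ℝ i j := by
  rw [← f.extendByAdjMatrix_apply_of_notMem_range x hij]
  refine eq_of_mem_openSegment_of_mem_Icc (hy₁.2.2.1 i j) (hy₂.2.2.1 i j) ?_
    (Matrix.apply_mem_openSegment hy i j)
  rw [f.extendByAdjMatrix_apply_of_notMem_range x hij]
  exact (G.isAdjMatrix_adjMatrix (α := ℝ)).zero_or_one i j

variable [DecidableRel H.Adj]

theorem sum_apply_map_eq_add_degree_sub {w : Matrix (Fin n) (Fin n) ℝ} (b : Fin m)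
    (hw : ∀ i ∉ Set.range f, w i (f b) = G.adjMatrix ℝ i (f b)) :
    ∑ i, w i (f b) = ∑ a, w (f a) (f b) + (G.degree (f b) - H.degree b) := by
  have hcompl : ∀ i ∈ (univ.map f.toEmbedding)ᶜ, w i (f b) = G.adjMatrix ℝ i (f b) :=
    fun i hi => hw i (by simpa using hi)
  rw [Fintype.sum_eq_sum_comp_add_sum_compl_map f.toEmbedding,
    ← f.degree_add_sum_adjMatrix_compl_map (α := ℝ) b, Finset.sum_congr rfl hcompl]
  simp

theorem submatrix_mem_degreePolytope {w : Matrix (Fin n) (Fin n) ℝ}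
    (hw : w ∈ degreePolytope fun i => G.degree i)
    (hout : ∀ i ∉ Set.range f, ∀ b, w i (f b) = G.adjMatrix ℝ i (f b)) :
    w.submatrix f f ∈ degreePolytope fun a => H.degree a := by
  obtain ⟨hsymm, hdiag, hbound, hsum⟩ := hw
  refine ⟨fun a b => hsymm _ _, fun a => hdiag _, fun a b => hbound _ _, fun b => ?_⟩
  have hcol := f.sum_apply_map_eq_add_degree_sub b (hout · · b)
  rw [hsum] at hcol
  simp only [Matrix.submatrix_apply]
  linarith

theorem extendByAdjMatrix_mem_degreePolytope {x : Matrix (Fin m) (Fin m) ℝ}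
    (hx : x ∈ degreePolytope fun a => H.degree a) :
    f.extendByAdjMatrix x ∈ degreePolytope fun i => G.degree i := by
  obtain ⟨hsymm, hdiag, hbound, hsum⟩ := hx
  have houter := f.extendByAdjMatrix_apply_of_notMem_range (α := ℝ) x
  have hG := G.isAdjMatrix_adjMatrix (α := ℝ)
  refine ⟨Function.forall₂_of_comp_of_notMem_range f ?_ ?_, fun i => ?_,
    Function.forall₂_of_comp_of_notMem_range f ?_ ?_, fun j => ?_⟩
  · intro a b
    simp only [extendByAdjMatrix_apply_apply, hsymm a b]
  · intro i j hij
    rw [houter hij, houter hij.symm, hG.symm.apply]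
  · by_cases hi : i ∈ Set.range f
    · obtain ⟨a, rfl⟩ := hi
      rw [extendByAdjMatrix_apply_apply, hdiag]
    · rw [houter (.inl hi), hG.apply_diag]
  · intro a b
    rw [extendByAdjMatrix_apply_apply]
    exact hbound a b
  · intro i j hij
    rw [houter hij]
    rcases hG.zero_or_one i j with h | h <;> simp only [h] <;> norm_num
  · by_cases hj : j ∈ Set.range f
    · obtain ⟨b, rfl⟩ := hj
      rw [f.sum_apply_map_eq_add_degree_sub b fun i hi => houter (.inl hi)]
      simp only [extendByAdjMatrix_apply_apply, hsum]
      ring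
    · rw [Finset.sum_congr rfl fun i _ => houter (.inr hj), sum_adjMatrix_apply_left]

theorem extendByAdjMatrix_mem_extremePoints {x : Matrix (Fin m) (Fin m) ℝ}
    (hx : x ∈ (degreePolytope fun a => H.degree a).extremePoints ℝ) :
    f.extendByAdjMatrix x ∈ (degreePolytope fun i => G.degree i).extremePoints ℝ := by
  replace hx := mem_extremePoints_iff_left.1 hx
  refine mem_extremePoints_iff_left.2
    ⟨f.extendByAdjMatrix_mem_degreePolytope hx.1, fun y₁ hy₁ y₂ hy₂ hy => ?_⟩
  have hy' : f.extendByAdjMatrix x ∈ openSegment ℝ y₂ y₁ := by rwa [openSegment_symm]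
  have hsub : y₁.submatrix f f = x := by
    refine hx.2 _ (f.submatrix_mem_degreePolytope hy₁ fun i hi b => ?_)
      _ (f.submatrix_mem_degreePolytope hy₂ fun i hi b => ?_) ?_
    · exact f.apply_eq_adjMatrix_of_extendByAdjMatrix_mem_openSegment hy₁ hy₂ hy (.inl hi)
    · exact f.apply_eq_adjMatrix_of_extendByAdjMatrix_mem_openSegment hy₂ hy₁ hy' (.inl hi)
    · have h := Matrix.submatrix_mem_openSegment hy f f
      rwa [submatrix_extendByAdjMatrix] at h
  refine funext₂ (Function.forall₂_of_comp_of_notMem_range f (fun a b => ?_) fun i j hij => ?_)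
  · rw [extendByAdjMatrix_apply_apply, ← hsub, Matrix.submatrix_apply]
  · rw [f.extendByAdjMatrix_apply_of_notMem_range x hij,
      f.apply_eq_adjMatrix_of_extendByAdjMatrix_mem_openSegment hy₁ hy₂ hy hij]

end DegreePolytope

end Embedding

end SimpleGraph

/-- decisive graphs form a hereditary class. -/
theorem decisive_hereditary {n m : ℕ} (G : SimpleGraph (Fin n)) (H : SimpleGraph (Fin m))
    (hemb : Nonempty (H ↪g G))
    (hG : Decisive fun i => {j | G.Adj i j}.ncard) :
    Decisive fun i => {j | H.Adj i j}.ncard := by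
  classical
  obtain ⟨f⟩ := hemb
  simp only [SimpleGraph.ncard_setOf_adj] at hG ⊢
  intro x hx i j
  have hext := hG _ (SimpleGraph.Embedding.extendByAdjMatrix_mem_extremePoints f hx) (f i) (f j)
  rwa [SimpleGraph.Embedding.extendByAdjMatrix_apply_apply f x i j] at hext
end

section
/- Let G be a simple graph admitting a partition V1, V2, V3 of its vertex set such that (i) V1 is an independent set and V2 is a clique; (ii) every vertex of V3 is adjacent to every vertex of V2 and to no vertex of V1; and (iii) G[V3] is a split graph, or has fewer than six vertices, or is isomorphic to one of U, the complement of U, K_2 + K_{1,m}, or (K_m + K_1) ∨ 2K_1 for some m ≥ 3. Then G contains no (3,3)-blossom. -/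
open Finset

/-!
Up to complementation, a (3,3)-blossom is a *cherry blossom*: induced paths `v₂ v₁ v₃` and
`w₂ w₁ w₃` on six distinct vertices with `v₁ w₁` a non-edge. The good structure is
self-complementary: `V1` and `V2` swap roles, `U` and `Uᶜ` swap, and `K₂ + K_{1,m}` is the
complement of `(K_m + K_1) ∨ 2K_1`. So it suffices to exclude cherry blossoms. A cherry centred
in `V1` would have two nonadjacent leaves in the clique `V2`; two nonadjacent centres outside `V1`
must then lie in `V3`, and the leaves of a cherry centred in `V3` can be neither in `V1` nor in
`V2`. Hence a cherry blossom of `G` lies in `G[V3]`, and none of the graphs allowed there has one.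
-/

section

variable {V W : Type*}

namespace SimpleGraph

def Iso.compl {G : SimpleGraph V} {H : SimpleGraph W} (e : G ≃g H) : Gᶜ ≃g Hᶜ where
  toEquiv := e.toEquiv
  map_rel_iff' {a b} := by simp [e.injective.ne_iff, ← e.map_adj_iff (v := a) (w := b)]

theorem induce_compl (G : SimpleGraph V) (s : Set V) : Gᶜ.induce s = (G.induce s)ᶜ := by
  ext x y
  simp [Subtype.ext_iff]

end SimpleGraph

open SimpleGraph

def IsCherry (G : SimpleGraph V) (x y z : V) : Prop :=
  G.Adj x y ∧ G.Adj x z ∧ ¬G.Adj y z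

theorem IsCherry.swap {G : SimpleGraph V} {x y z : V} (h : IsCherry G x y z) :
    IsCherry G x z y :=
  ⟨h.2.1, h.1, fun hzy => h.2.2 hzy.symm⟩

/-- The first alternative of `Has33Blossom`, with the quantifiers ordered so that `decide` can
prune on small graphs. -/
def HasCherryBlossom (G : SimpleGraph V) : Prop :=
  ∃ v₁ v₂ v₃, IsCherry G v₁ v₂ v₃ ∧ ∃ w₁ w₂ w₃, IsCherry G w₁ w₂ w₃ ∧ ¬G.Adj v₁ w₁ ∧
    [v₁, v₂, v₃, w₁, w₂, w₃].Nodup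

theorem Has33Blossom.hasCherryBlossom_or_compl {G : SimpleGraph V} (h : Has33Blossom G) :
    HasCherryBlossom G ∨ HasCherryBlossom Gᶜ := by
  obtain ⟨v₁, v₂, v₃, w₁, w₂, w₃, hnd,
    ⟨h₁, h₂, h₃, h₄, h₅, h₆, h₇⟩ | ⟨h₁, h₂, h₃, h₄, h₅, h₆, h₇⟩⟩ := h
  · exact .inl ⟨v₁, v₂, v₃, ⟨h₁, h₃.symm, h₂⟩, w₁, w₂, w₃, ⟨h₅, h₇.symm, h₆⟩, h₄, hnd⟩
  · refine .inr ⟨v₁, v₂, v₃, ?_, w₁, w₂, w₃, ?_, ?_, hnd⟩ <;>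
      simp_all [IsCherry, compl_adj, eq_comm, adj_comm]

theorem HasCherryBlossom.map {G : SimpleGraph V} {H : SimpleGraph W} (e : G ≃g H)
    (h : HasCherryBlossom G) : HasCherryBlossom H := by
  obtain ⟨v₁, v₂, v₃, hv, w₁, w₂, w₃, hw, hvw, hnd⟩ := h
  refine ⟨e v₁, e v₂, e v₃, ?_, e w₁, e w₂, e w₃, ?_, ?_, ?_⟩
  · simpa only [IsCherry, e.map_adj_iff] using hv
  · simpa only [IsCherry, e.map_adj_iff] using hw
  · simpa only [e.map_adj_iff] using hvw
  · simpa using hnd.map e.injective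

theorem HasCherryBlossom.six_le_natCard [Finite V] {G : SimpleGraph V}
    (h : HasCherryBlossom G) : 6 ≤ Nat.card V :=
  let ⟨_, _, _, _, _, _, _, _, _, hnd⟩ := h
  hnd.length_le_natCard

namespace GoodPartition

variable {G : SimpleGraph V} {V1 V2 V3 : Set V} (hP : GoodPartition G V1 V2 V3)
include hP

theorem mem_or_mem_or_mem (x : V) : x ∈ V1 ∨ x ∈ V2 ∨ x ∈ V3 := by
  have hx : x ∈ V1 ∪ V2 ∪ V3 := hP.1 ▸ Set.mem_univ x
  simpa [or_assoc] using hx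

theorem mem_V2_of_adj {x y : V} (hx : x ∈ V1) (hxy : G.Adj x y) : y ∈ V2 := by
  have ⟨_, _, _, _, hI, _, _, h31⟩ := hP
  rcases hP.mem_or_mem_or_mem y with hy | hy | hy
  · exact absurd hxy (hI x hx y hy)
  · exact hy
  · exact absurd hxy.symm (h31 y hy x hx)

theorem notMem_V1_of_isCherry {x y z : V} (h : IsCherry G x y z) (hyz : y ≠ z) : x ∉ V1 := by
  have ⟨_, _, _, _, _, hC, _, _⟩ := hP
  exact fun hx => h.2.2 (hC y (hP.mem_V2_of_adj hx h.1) z (hP.mem_V2_of_adj hx h.2.1) hyz)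

theorem mem_V3_of_not_adj {x y : V} (hx : x ∉ V1) (hy : y ∉ V1) (hxy : ¬G.Adj x y)
    (hne : x ≠ y) : x ∈ V3 := by
  have ⟨_, _, _, _, _, hC, h32, _⟩ := hP
  rcases hP.mem_or_mem_or_mem x with hx1 | hx2 | hx3
  · exact absurd hx1 hx
  · rcases hP.mem_or_mem_or_mem y with hy1 | hy2 | hy3
    · exact absurd hy1 hy
    · exact absurd (hC x hx2 y hy2 hne) hxy
    · exact absurd (h32 y hy3 x hx2).symm hxy
  · exact hx3

theorem mem_V3_of_isCherry {x y z : V} (hx : x ∈ V3) (h : IsCherry G x y z) (hyz : y ≠ z) :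
    y ∈ V3 := by
  have ⟨_, _, _, _, _, hC, h32, h31⟩ := hP
  rcases hP.mem_or_mem_or_mem y with hy1 | hy2 | hy3
  · exact absurd h.1 (h31 x hx y hy1)
  · rcases hP.mem_or_mem_or_mem z with hz1 | hz2 | hz3
    · exact absurd h.2.1 (h31 x hx z hz1)
    · exact absurd (hC y hy2 z hz2 hyz) h.2.2
    · exact absurd (h32 z hz3 y hy2).symm h.2.2
  · exact hy3

theorem hasCherryBlossom_induce (h : HasCherryBlossom G) : HasCherryBlossom (G.induce V3) := by
  obtain ⟨v₁, v₂, v₃, hv, w₁, w₂, w₃, hw, hvw, hnd⟩ := h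
  have hne : v₁ ≠ w₁ ∧ v₂ ≠ v₃ ∧ w₂ ≠ w₃ := by simp_all
  have hv₁ : v₁ ∉ V1 := hP.notMem_V1_of_isCherry hv hne.2.1
  have hw₁ : w₁ ∉ V1 := hP.notMem_V1_of_isCherry hw hne.2.2
  have mv₁ : v₁ ∈ V3 := hP.mem_V3_of_not_adj hv₁ hw₁ hvw hne.1
  have mw₁ : w₁ ∈ V3 := hP.mem_V3_of_not_adj hw₁ hv₁ (fun h => hvw h.symm) hne.1.symm
  refine ⟨⟨v₁, mv₁⟩, ⟨v₂, hP.mem_V3_of_isCherry mv₁ hv hne.2.1⟩,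
    ⟨v₃, hP.mem_V3_of_isCherry mv₁ hv.swap hne.2.1.symm⟩, hv,
    ⟨w₁, mw₁⟩, ⟨w₂, hP.mem_V3_of_isCherry mw₁ hw hne.2.2⟩,
    ⟨w₃, hP.mem_V3_of_isCherry mw₁ hw.swap hne.2.2.symm⟩, hw, hvw, .of_map Subtype.val hnd⟩

theorem compl : GoodPartition Gᶜ V2 V1 V3 := by
  obtain ⟨hcov, d12, d13, d23, hI, hC, h32, h31⟩ := hP
  refine ⟨by rwa [Set.union_comm V2], d12.symm, d23, d13,
    fun a ha b hb hab => hab.2 (hC a ha b hb hab.1), fun a ha b hb hne => ⟨hne, hI a ha b hb⟩,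
    fun v hv u hu => ⟨?_, h31 v hv u hu⟩, fun v hv u hu hvu => hvu.2 (h32 v hv u hu)⟩
  rintro rfl
  exact d13.ne_of_mem hu hv rfl

end GoodPartition

theorem isSplit_iff_exists_goodPartition {G : SimpleGraph V} :
    IsSplit G ↔ ∃ A B, GoodPartition G A B ∅ := by
  simp [IsSplit, GoodPartition]

theorem IsSplit.compl {G : SimpleGraph V} (h : IsSplit G) : IsSplit Gᶜ :=
  let ⟨A, B, hP⟩ := isSplit_iff_exists_goodPartition.1 h
  isSplit_iff_exists_goodPartition.2 ⟨B, A, hP.compl⟩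

theorem IsSplit.not_hasCherryBlossom {G : SimpleGraph V} (h : IsSplit G) :
    ¬HasCherryBlossom G := fun hb => by
  obtain ⟨A, B, hP⟩ := isSplit_iff_exists_goodPartition.1 h
  simpa using (hP.hasCherryBlossom_induce hb).six_le_natCard

namespace graphK2PlusStar

def complIsoKmK1Join (m : ℕ) : (graphK2PlusStar m)ᶜ ≃g graphKmK1Join m where
  toEquiv := (Equiv.sumComm _ _).trans (Equiv.sumCongr Fin.revPerm (Equiv.refl _))
  map_rel_iff' {a b} := by
    rcases a with i | i <;> rcases b with j | j <;>
      simp [graphKmK1Join, graphK2PlusStar] <;> grind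

variable {m : ℕ}

theorem eq_inr_zero_of_adj_of_adj {x y z : Fin 2 ⊕ Fin (m + 1)}
    (hy : (graphK2PlusStar m).Adj x y) (hz : (graphK2PlusStar m).Adj x z) (hyz : y ≠ z) :
    x = .inr 0 := by
  simp only [graphK2PlusStar, fromRel_adj] at hy hz
  grind

theorem eq_inl_zero_or_eq_inr_zero_of_adj {x y : Fin 2 ⊕ Fin (m + 1)}
    (h : (graphK2PlusStar m).Adj x y) :
    x = .inl 0 ∨ y = .inl 0 ∨ x = .inr 0 ∨ y = .inr 0 := by
  simp only [graphK2PlusStar, fromRel_adj] at h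
  grind

theorem not_hasCherryBlossom : ¬HasCherryBlossom (graphK2PlusStar m) := by
  rintro ⟨v₁, v₂, v₃, hv, w₁, w₂, w₃, hw, -, hnd⟩
  simp only [List.nodup_cons, List.mem_cons, List.not_mem_nil] at hnd
  have hv₁ := eq_inr_zero_of_adj_of_adj hv.1 hv.2.1 (by tauto)
  have hw₁ := eq_inr_zero_of_adj_of_adj hw.1 hw.2.1 (by tauto)
  exact hnd.1 (by simp [hv₁, hw₁])

/-- The non-edges `v₂ v₃`, `v₁ w₁`, `w₂ w₃` of a cherry blossom in the complement would be three
disjoint edges of `K₂ + K_{1,m}`, but each of its edges contains `inl 0` or `inr 0`. -/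
theorem not_hasCherryBlossom_compl : ¬HasCherryBlossom (graphK2PlusStar m)ᶜ := by
  rintro ⟨v₁, v₂, v₃, hv, w₁, w₂, w₃, hw, hvw, hnd⟩
  simp only [List.nodup_cons, List.mem_cons, List.not_mem_nil] at hnd
  simp only [IsCherry, compl_adj, not_and, not_not] at hv hw hvw
  have := eq_inl_zero_or_eq_inr_zero_of_adj (hv.2.2 (by tauto))
  have := eq_inl_zero_or_eq_inr_zero_of_adj (hw.2.2 (by tauto))
  have := eq_inl_zero_or_eq_inr_zero_of_adj (hvw (by tauto))
  grind

end graphK2PlusStar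

instance : DecidableRel graphU.Adj := fun _ _ => inferInstanceAs (Decidable (_ ∧ _))

theorem graphU.not_hasCherryBlossom : ¬HasCherryBlossom graphU := by
  unfold HasCherryBlossom IsCherry
  decide

theorem graphU.not_hasCherryBlossom_compl : ¬HasCherryBlossom graphUᶜ := by
  unfold HasCherryBlossom IsCherry
  decide

namespace SpecialPart

variable {G : SimpleGraph V} {s : Set V}

theorem compl (h : SpecialPart G s) : SpecialPart Gᶜ s := by
  unfold SpecialPart at h ⊢
  rw [induce_compl]
  rcases h with h | h | ⟨⟨e⟩⟩ | ⟨⟨e⟩⟩ | ⟨m, hm, ⟨e⟩⟩ | ⟨m, hm, ⟨e⟩⟩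
  · exact .inl h.compl
  · exact .inr (.inl h)
  · exact .inr (.inr (.inr (.inl ⟨e.compl⟩)))
  · exact .inr (.inr (.inl ⟨compl_compl graphU ▸ e.compl⟩))
  · refine .inr (.inr (.inr (.inr (.inr ⟨m, hm, ⟨?_⟩⟩))))
    exact e.compl.trans (graphK2PlusStar.complIsoKmK1Join m)
  · refine .inr (.inr (.inr (.inr (.inl ⟨m, hm, ⟨?_⟩⟩))))
    exact compl_compl (graphK2PlusStar m) ▸
      e.compl.trans (graphK2PlusStar.complIsoKmK1Join m).symm.compl

theorem not_hasCherryBlossom_induce [Finite V] (h : SpecialPart G s) :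
    ¬HasCherryBlossom (G.induce s) := by
  rcases h with h | h | ⟨⟨e⟩⟩ | ⟨⟨e⟩⟩ | ⟨m, -, ⟨e⟩⟩ | ⟨m, -, ⟨e⟩⟩
  · exact h.not_hasCherryBlossom
  · exact fun hb => absurd h (not_lt.2 hb.six_le_natCard)
  · exact fun hb => graphU.not_hasCherryBlossom (hb.map e)
  · exact fun hb => graphU.not_hasCherryBlossom_compl (hb.map e)
  · exact fun hb => graphK2PlusStar.not_hasCherryBlossom (hb.map e)
  · exact fun hb => graphK2PlusStar.not_hasCherryBlossom_compl
      (hb.map (e.trans (graphK2PlusStar.complIsoKmK1Join m).symm))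

end SpecialPart

end

/-- a graph with the good structure contains no `(3,3)`-blossom. -/
theorem no_33blossom_of_good_structure {V : Type*} [Fintype V] (G : SimpleGraph V)
    (hG : HasGoodStructure G) : ¬Has33Blossom G := by
  obtain ⟨V1, V2, V3, hP, hS⟩ := hG
  intro hb
  rcases hb.hasCherryBlossom_or_compl with h | h
  · exact hS.not_hasCherryBlossom_induce (hP.hasCherryBlossom_induce h)
  · exact hS.compl.not_hasCherryBlossom_induce (hP.compl.hasCherryBlossom_induce h)
end

section
/- If d = (d_1, …, d_n) is a threshold sequence, i.e., a graphic list with exactly one realization (exactly one simple graph on vertex set {1,…,n} in which each vertex i has degree d_i), then P(d) consists of a single point. -/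
/-!
A graph that is the unique realization of its degree sequence has no alternating 4-cycle
(edges `ab`, `cd`, non-edges `ad`, `bc`): the 2-switch along it would give a second realization.
In such a graph neighbourhoods are nested, so in every vertex set `S` a vertex of maximum degree
in `S` is adjacent to all of `S`, unless some vertex has no neighbour in `S`. At such a vertex `v`
the column of a fractional realization `x` lies entirely below (resp. above) the adjacency
matrix and has the same sum, hence agrees with it; deleting `v` and inducting gives `x = A(G)`.
-/

open Finset

namespace SimpleGraph

variable {V : Type*} {G : SimpleGraph V} {a b c d : V}

/-- No alternating 4-cycle `a b c d`; by Chvátal–Hammer these are exactly the threshold graphs. -/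
def IsThreshold (G : SimpleGraph V) : Prop :=
  ∀ ⦃a b c d⦄, G.Adj a b → G.Adj c d → a ≠ d → b ≠ c → G.Adj a d ∨ G.Adj b c

def twoSwitch (G : SimpleGraph V) (a b c d : V) : SimpleGraph V :=
  G.deleteEdges {s(a, b), s(c, d)} ⊔ edge a d ⊔ edge b c

lemma twoSwitch_eq_swap (G : SimpleGraph V) (a b c d : V) :
    G.twoSwitch a b c d = G.twoSwitch b a d c := by
  ext x y
  simp only [twoSwitch, sup_adj, deleteEdges_adj, edge_adj, Set.mem_insert_iff,
    Set.mem_singleton_iff, Sym2.eq_swap]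
  tauto

lemma twoSwitch_eq_rotate (G : SimpleGraph V) (a b c d : V) :
    G.twoSwitch a b c d = G.twoSwitch c d a b := by
  ext x y
  simp only [twoSwitch, sup_adj, deleteEdges_adj, edge_adj, Set.mem_insert_iff,
    Set.mem_singleton_iff]
  tauto

lemma neighborSet_twoSwitch_left (hab : a ≠ b) (hac : a ≠ c) (had : a ≠ d) :
    (G.twoSwitch a b c d).neighborSet a = insert d (G.neighborSet a \ {b}) := by
  ext j
  simp only [twoSwitch, mem_neighborSet, sup_adj, deleteEdges_adj, edge_adj, Set.mem_insert_iff,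
    Set.mem_singleton_iff, Set.mem_sdiff, Sym2.eq_iff]
  grind [G.ne_of_adj]

lemma neighborSet_twoSwitch_of_ne {x : V} (ha : x ≠ a) (hb : x ≠ b) (hc : x ≠ c) (hd : x ≠ d) :
    (G.twoSwitch a b c d).neighborSet x = G.neighborSet x := by
  ext j
  simp only [twoSwitch, mem_neighborSet, sup_adj, deleteEdges_adj, edge_adj, Set.mem_insert_iff,
    Set.mem_singleton_iff, Sym2.eq_iff]
  tauto

lemma ncard_neighborSet_twoSwitch_left (hab : G.Adj a b) (hac : a ≠ c) (hnad : ¬G.Adj a d)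
    (had : a ≠ d) : ((G.twoSwitch a b c d).neighborSet a).ncard = (G.neighborSet a).ncard := by
  rw [neighborSet_twoSwitch_left hab.ne hac had]
  exact Set.ncard_exchange hnad hab

lemma ncard_neighborSet_twoSwitch (hab : G.Adj a b) (hcd : G.Adj c d) (hnad : ¬G.Adj a d)
    (hnbc : ¬G.Adj b c) (had : a ≠ d) (hbc : b ≠ c) (x : V) :
    ((G.twoSwitch a b c d).neighborSet x).ncard = (G.neighborSet x).ncard := by
  have hac : a ≠ c := by rintro rfl; exact hnad hcd
  have hbd : b ≠ d := by rintro rfl; exact hnad hab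
  by_cases hxa : x = a
  · subst hxa
    exact ncard_neighborSet_twoSwitch_left hab hac hnad had
  by_cases hxb : x = b
  · subst hxb
    rw [twoSwitch_eq_swap]
    exact ncard_neighborSet_twoSwitch_left hab.symm hbd hnbc hbc
  by_cases hxc : x = c
  · subst hxc
    rw [twoSwitch_eq_rotate]
    exact ncard_neighborSet_twoSwitch_left hcd hac.symm (fun h => hnbc h.symm) hbc.symm
  by_cases hxd : x = d
  · subst hxd
    rw [twoSwitch_eq_rotate, twoSwitch_eq_swap]
    exact ncard_neighborSet_twoSwitch_left hcd.symm hbd.symm (fun h => hnad h.symm) had.symm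
  rw [neighborSet_twoSwitch_of_ne hxa hxb hxc hxd]

lemma isThreshold_of_unique_degrees
    (h : ∀ H : SimpleGraph V, (∀ v, (H.neighborSet v).ncard = (G.neighborSet v).ncard) → H = G) :
    G.IsThreshold := by
  intro a b c d hab hcd had hbc
  by_contra! hnon
  have hswitch := h _ (ncard_neighborSet_twoSwitch hab hcd hnon.1 hnon.2 had hbc)
  apply hnon.1
  rw [← hswitch]
  simp [twoSwitch, edge_adj, had]

lemma IsThreshold.neighborSet_sdiff_subset_or (hG : G.IsThreshold) (u w : V) :
    G.neighborSet u \ {w} ⊆ G.neighborSet w ∨ G.neighborSet w \ {u} ⊆ G.neighborSet u := by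
  by_contra! h
  obtain ⟨p, ⟨hup, hpw⟩, hwp⟩ := Set.not_subset.1 h.1
  obtain ⟨q, ⟨hwq, hqu⟩, huq⟩ := Set.not_subset.1 h.2
  exact (hG hup hwq (Ne.symm hqu) hpw).elim huq (fun hpw' => hwp hpw'.symm)

lemma IsThreshold.exists_adj_adj_of_not_adj (hG : G.IsThreshold) {S : Set V} {u w : V}
    (huw : ¬G.Adj u w) (hu : ∃ z ∈ S, G.Adj u z) (hw : ∃ z ∈ S, G.Adj w z) :
    ∃ z ∈ S, G.Adj u z ∧ G.Adj w z := by
  obtain ⟨zu, hzu, huzu⟩ := hu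
  obtain ⟨zw, hzw, hwzw⟩ := hw
  rcases hG.neighborSet_sdiff_subset_or u w with h | h
  · exact ⟨zu, hzu, huzu, h ⟨huzu, fun hzu_eq => huw (hzu_eq ▸ huzu)⟩⟩
  · exact ⟨zw, hzw, h ⟨hwzw, fun hzw_eq => huw (hzw_eq ▸ hwzw).symm⟩, hwzw⟩

lemma IsThreshold.card_filter_adj_lt (hG : G.IsThreshold) [DecidableRel G.Adj] {S : Finset V}
    {u w z : V} (hu : u ∈ S) (hw : w ∈ S) (huz : G.Adj u z) (hwz : G.Adj w z)
    (huw : ¬G.Adj u w) (hne : u ≠ w) :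
    #{t ∈ S | G.Adj u t} < #{t ∈ S | G.Adj z t} := by
  classical
  rcases hG.neighborSet_sdiff_subset_or u z with h | h
  -- `N(z)` then contains `N(u) \ {z}` and also `u` and `w`, which are not in `N(u)`.
  · have hsub : {t ∈ S | G.Adj u t}.erase z ⊆ ({t ∈ S | G.Adj z t}.erase u).erase w := by
      intro t ht
      simp only [mem_erase, mem_filter] at ht ⊢
      refine ⟨?_, ?_, ht.2.1, h ⟨ht.2.2, ht.1⟩⟩
      · rintro rfl; exact huw ht.2.2
      · rintro rfl; exact G.loopless.irrefl _ ht.2.2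
    have hcard := card_le_card hsub
    have hu' : #({t ∈ S | G.Adj z t}.erase u) + 1 = #{t ∈ S | G.Adj z t} :=
      card_erase_add_one (mem_filter.2 ⟨hu, huz.symm⟩)
    have hw' : #(({t ∈ S | G.Adj z t}.erase u).erase w) + 1 = #({t ∈ S | G.Adj z t}.erase u) :=
      card_erase_add_one (mem_erase.2 ⟨hne.symm, mem_filter.2 ⟨hw, hwz.symm⟩⟩)
    have hz := pred_card_le_card_erase (s := {t ∈ S | G.Adj u t}) (a := z)
    omega
  · exact absurd (h ⟨hwz.symm, hne.symm⟩) huw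

lemma IsThreshold.exists_dominating_or_isolated (hG : G.IsThreshold) {S : Finset V}
    (hS : S.Nonempty) :
    ∃ v ∈ S, (∀ u ∈ S, u ≠ v → G.Adj v u) ∨ ∀ u ∈ S, ¬G.Adj v u := by
  classical
  by_cases hiso : ∃ v ∈ S, ∀ u ∈ S, ¬G.Adj v u
  · obtain ⟨v, hv, hiso⟩ := hiso
    exact ⟨v, hv, Or.inr hiso⟩
  push Not at hiso
  obtain ⟨u, hu, hmax⟩ := S.exists_max_image (fun v => #{t ∈ S | G.Adj v t}) hS
  refine ⟨u, hu, Or.inl fun w hw hwu => ?_⟩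
  by_contra huw
  obtain ⟨z, hz, huz, hwz⟩ := hG.exists_adj_adj_of_not_adj huw (hiso u hu) (hiso w hw)
  exact (hG.card_filter_adj_lt hu hw huz hwz huw hwu.symm).not_ge (hmax z hz)

variable [DecidableRel G.Adj]

lemma eq_adjMatrix_apply_of_sum_eq {x : V → V → ℝ} {S : Finset V} {v : V}
    (hx : ∀ i, 0 ≤ x i v ∧ x i v ≤ 1) (hvv : x v v = 0)
    (hv : (∀ u ∈ S, u ≠ v → G.Adj v u) ∨ ∀ u ∈ S, ¬G.Adj v u)
    (hsum : ∑ i ∈ S, x i v = ∑ i ∈ S, G.adjMatrix ℝ i v) :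
    ∀ i ∈ S, x i v = G.adjMatrix ℝ i v := by
  rcases hv with hdom | hiso
  · refine (sum_eq_sum_iff_of_le fun i hi => ?_).1 hsum
    by_cases hiv : i = v
    · simp [hiv, hvv]
    · rw [adjMatrix_apply, if_pos (hdom i hi hiv).symm]
      exact (hx i).2
  · refine fun i hi => ((sum_eq_sum_iff_of_le fun i hi => ?_).1 hsum.symm i hi).symm
    rw [adjMatrix_apply, if_neg fun h => hiso i hi h.symm]
    exact (hx i).1

lemma IsThreshold.eq_adjMatrix_of_sum_eq (hG : G.IsThreshold) {x : V → V → ℝ}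
    (hsymm : ∀ i j, x i j = x j i) (hdiag : ∀ i, x i i = 0) (hx : ∀ i j, 0 ≤ x i j ∧ x i j ≤ 1)
    (S : Finset V) (hsum : ∀ j ∈ S, ∑ i ∈ S, x i j = ∑ i ∈ S, G.adjMatrix ℝ i j) :
    ∀ i ∈ S, ∀ j ∈ S, x i j = G.adjMatrix ℝ i j := by
  classical
  induction S using Finset.strongInduction with
  | H S ih =>
  rcases S.eq_empty_or_nonempty with rfl | hS
  · simp
  obtain ⟨v, hv, hvS⟩ := hG.exists_dominating_or_isolated hS
  have hcol := eq_adjMatrix_apply_of_sum_eq (fun i => hx i v) (hdiag v) hvS (hsum v hv)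
  have hrow (j : V) (hj : j ∈ S) : x v j = G.adjMatrix ℝ v j := by
    rw [hsymm, hcol j hj, (isSymm_adjMatrix G).apply]
  have hrest := ih (S.erase v) (S.erase_ssubset hv) fun j hj => by
    have hjS := mem_of_mem_erase hj
    rw [sum_erase_eq_sub hv, sum_erase_eq_sub hv, hsum j hjS, hrow j hjS]
  intro i hi j hj
  by_cases hiv : i = v
  · rw [hiv, hrow j hj]
  by_cases hjv : j = v
  · rw [hjv, hcol i hi]
  exact hrest i (mem_erase.2 ⟨hiv, hi⟩) j (mem_erase.2 ⟨hjv, hj⟩)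

lemma sum_adjMatrix_apply [Fintype V] (j : V) :
    ∑ i, G.adjMatrix ℝ i j = (G.neighborSet j).ncard := by
  rw [← coe_neighborFinset, Set.ncard_coe_finset]
  simp [adjMatrix_apply, sum_boole, neighborFinset_eq_filter, adj_comm]

end SimpleGraph

open SimpleGraph

lemma IsRealization.adjMatrix_mem_degreePolytope {n : ℕ} {d : Fin n → ℕ}
    {G : SimpleGraph (Fin n)} [DecidableRel G.Adj] (hG : IsRealization d G) :
    G.adjMatrix ℝ ∈ degreePolytope d := by
  refine ⟨fun i j => (isSymm_adjMatrix G).apply j i, fun i => by simp, fun i j => ?_, fun j => ?_⟩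
  · rw [adjMatrix_apply]
    split_ifs <;> norm_num
  · rw [G.sum_adjMatrix_apply j]
    exact_mod_cast hG j

/-- if `d` is a threshold sequence (unique labeled realization),
then `P(d)` consists of a single point. -/
theorem threshold_polytope_is_singleton {n : ℕ} (d : Fin n → ℕ)
    (h : ∃! G : SimpleGraph (Fin n), IsRealization d G) :
    ∃! x : Fin n → Fin n → ℝ, x ∈ degreePolytope d := by
  classical
  obtain ⟨G, hG, huniq⟩ := h
  have hthreshold : G.IsThreshold :=
    isThreshold_of_unique_degrees fun H hH => huniq H fun i => (hH i).trans (hG i)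
  have hmem := hG.adjMatrix_mem_degreePolytope
  refine ⟨G.adjMatrix ℝ, hmem, ?_⟩
  rintro y ⟨hsymm, hdiag, hy, hsum⟩
  funext i j
  exact hthreshold.eq_adjMatrix_of_sum_eq hsymm hdiag hy univ
    (fun j _ => (hsum j).trans (hmem.2.2.2 j).symm) i (mem_univ i) j (mem_univ j)
end

section
/- Let H be an indecomposable, B-free simple graph with no induced subgraph isomorphic to any of C_5, P_5, the house graph (the complement of P_5), K_2 + K_3, or K_{2,3}. Suppose a, b, c, d are four distinct vertices of H such that ab and cd are edges and ac, ad, bc, bd are non-edges (so {a,b,c,d} induces 2K_2). Then every vertex of H outside {a,b,c,d} is adjacent to exactly one or exactly three of the vertices a, b, c, d. -/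
open Finset

/-!
Write `N(v)` for the set of neighbours of `v` among `a, b, c, d`. If `|N(v)| = 2`, then `v` and
the `2K_2` induce `K_2 + K_3` (when `N(v)` is `{a, b}` or `{c, d}`) or `P_5` (otherwise). If some
`w` had `N(w) = ∅` or `N(w) = {a, b, c, d}`, then the vertices with `N = ∅`, those with
`N = {a, b, c, d}` and all others would decompose the graph: each adjacency or non-adjacency that
such a decomposition requires can only fail at two vertices `u, v` outside the `2K_2`, and then
`u, v, a, b, c, d` induce a graph whose degree sequence is one of those of `B`.
-/

def rowDegrees {n : ℕ} (M : Fin n → Fin n → Bool) : Multiset ℕ :=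
  univ.val.map fun i => #{j | M i j}

theorem BFree.rowDegrees_notMem {V : Type*} {G : SimpleGraph V} (hB : BFree G) {x : Fin 6 → V}
    (hx : Function.Injective x) {M : Fin 6 → Fin 6 → Bool}
    (hM : ∀ i j, G.Adj (x i) (x j) ↔ M i j) : rowDegrees M ∉ BDegSeqs := by
  classical
  have hdeg (i : Fin 6) :
      {u | u ∈ univ.map ⟨x, hx⟩ ∧ G.Adj (x i) u}.ncard = #{j | M i j} := by
    have : {u | u ∈ univ.map ⟨x, hx⟩ ∧ G.Adj (x i) u} =
        x '' ↑({j | M i j} : Finset (Fin 6)) := by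
      ext u
      simp only [Set.mem_ofPred_eq, mem_map, mem_univ, true_and, Function.Embedding.coeFn_mk,
        coe_filter, Set.mem_image]
      grind
    rw [this, Set.ncard_image_of_injective _ hx, Set.ncard_coe_finset]
  have := hB (univ.map ⟨x, hx⟩) (by simp)
  simp only [map_val, Multiset.map_map, Function.comp_def, Function.Embedding.coeFn_mk,
    hdeg] at this
  exact this

/-- The adjacency matrix of `![u, v, a, b, c, d]` when `ab`, `cd` is an induced `2K_2` and `u`, `v`
are joined to the members indexed by `P`, `Q` and to each other iff `e`. -/
def twoK2ExtMatrix (P Q : Finset (Fin 4)) (e : Bool) : Fin 6 → Fin 6 → Bool :=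
  ![![false, e, 0 ∈ P, 1 ∈ P, 2 ∈ P, 3 ∈ P],
    ![e, false, 0 ∈ Q, 1 ∈ Q, 2 ∈ Q, 3 ∈ Q],
    ![0 ∈ P, 0 ∈ Q, false, true, false, false],
    ![1 ∈ P, 1 ∈ Q, true, false, false, false],
    ![2 ∈ P, 2 ∈ Q, false, false, false, true],
    ![3 ∈ P, 3 ∈ Q, false, false, true, false]]

set_option synthInstance.maxSize 1000 in
theorem rowDegrees_twoK2ExtMatrix_empty_mem :
    ∀ P : Finset (Fin 4), #P ≠ 2 → P ≠ univ →
      rowDegrees (twoK2ExtMatrix P ∅ true) ∈ BDegSeqs := by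
  simp only [BDegSeqs, Set.mem_insert_iff, Set.mem_singleton_iff]
  decide

set_option synthInstance.maxSize 1000 in
theorem rowDegrees_twoK2ExtMatrix_univ_mem :
    ∀ P : Finset (Fin 4), #P ≠ 2 → P ≠ ∅ →
      rowDegrees (twoK2ExtMatrix P univ false) ∈ BDegSeqs := by
  simp only [BDegSeqs, Set.mem_insert_iff, Set.mem_singleton_iff]
  decide

namespace SimpleGraph

variable {V W : Type*} {G : SimpleGraph V}

theorem injective_of_adj_iff {F : SimpleGraph W}
    (hF : ∀ i j, (∀ k, F.Adj i k ↔ F.Adj j k) → i = j)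
    {x : W → V} (hx : ∀ i j, G.Adj (x i) (x j) ↔ F.Adj i j) : Function.Injective x :=
  fun i j hij => hF i j fun k => by rw [← hx, ← hx, hij]

theorem exists_induce_iso_of_adj_iff {F : SimpleGraph W}
    (hF : ∀ i j, (∀ k, F.Adj i k ↔ F.Adj j k) → i = j)
    {x : W → V} (hx : ∀ i j, G.Adj (x i) (x j) ↔ F.Adj i j) :
    ∃ s : Set V, Nonempty (G.induce s ≃g F) :=
  let f : F ↪g G := ⟨⟨x, injective_of_adj_iff hF hx⟩, hx _ _⟩
  ⟨_, ⟨f.isoInduceRange.symm⟩⟩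

instance : DecidableRel graphP5.Adj := fun _ _ => by unfold graphP5; infer_instance

instance : DecidableRel graphK2PlusK3.Adj := fun _ _ => by unfold graphK2PlusK3; infer_instance

theorem exists_induce_iso_graphP5 {p q r s t : V}
    (hpq : G.Adj p q) (hqr : G.Adj q r) (hrs : G.Adj r s) (hst : G.Adj s t)
    (hpr : ¬G.Adj p r) (hps : ¬G.Adj p s) (hpt : ¬G.Adj p t)
    (hqs : ¬G.Adj q s) (hqt : ¬G.Adj q t) (hrt : ¬G.Adj r t) :
    ∃ S : Set V, Nonempty (G.induce S ≃g graphP5) := by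
  refine exists_induce_iso_of_adj_iff (x := ![p, q, r, s, t]) (by decide) fun i j => ?_
  fin_cases i <;> fin_cases j <;> simp [graphP5, adj_comm, *]

theorem exists_induce_iso_graphK2PlusK3 {p q r s t : V}
    (hpq : G.Adj p q) (hrs : G.Adj r s) (hst : G.Adj s t) (hrt : G.Adj r t)
    (hpr : ¬G.Adj p r) (hps : ¬G.Adj p s) (hpt : ¬G.Adj p t)
    (hqr : ¬G.Adj q r) (hqs : ¬G.Adj q s) (hqt : ¬G.Adj q t) :
    ∃ S : Set V, Nonempty (G.induce S ≃g graphK2PlusK3) := by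
  refine exists_induce_iso_of_adj_iff (x := ![p, q, r, s, t]) (by decide) fun i j => ?_
  fin_cases i <;> fin_cases j <;> simp [graphK2PlusK3, adj_comm, *]

open Classical in
variable (G) in
noncomputable def adjIndices {n : ℕ} (x : Fin n → V) (v : V) : Finset (Fin n) :=
  {i | G.Adj v (x i)}

@[simp]
theorem mem_adjIndices {n : ℕ} {x : Fin n → V} {v : V} {i : Fin n} :
    i ∈ G.adjIndices x v ↔ G.Adj v (x i) := by
  simp [adjIndices]

theorem notMem_range_of_adjIndices_eq_univ {n : ℕ} {x : Fin n → V} {v : V}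
    (hv : G.adjIndices x v = univ) : v ∉ Set.range x := by
  rintro ⟨i, rfl⟩
  exact G.irrefl (mem_adjIndices.1 (hv ▸ mem_univ i))

theorem ncard_setOf_adj_mem_range {n : ℕ} {x : Fin n → V} (hx : Function.Injective x) (v : V) :
    {y ∈ Set.range x | G.Adj v y}.ncard = #(G.adjIndices x v) := by
  have : {y ∈ Set.range x | G.Adj v y} = x '' (G.adjIndices x v : Set (Fin n)) := by
    ext y
    simp only [Set.mem_ofPred_eq, Set.mem_range, Set.mem_image, Finset.mem_coe, mem_adjIndices]
    grind
  rw [this, Set.ncard_image_of_injective _ hx, Set.ncard_coe_finset]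

variable (G) in
structure IsInduced2K2 (a b c d : V) : Prop where
  adj_ab : G.Adj a b
  adj_cd : G.Adj c d
  not_adj_ac : ¬G.Adj a c
  not_adj_ad : ¬G.Adj a d
  not_adj_bc : ¬G.Adj b c
  not_adj_bd : ¬G.Adj b d

namespace IsInduced2K2

variable {a b c d u v w : V}

theorem swap_left (h : G.IsInduced2K2 a b c d) : G.IsInduced2K2 b a c d :=
  ⟨h.adj_ab.symm, h.adj_cd, h.not_adj_bc, h.not_adj_bd, h.not_adj_ac, h.not_adj_ad⟩

theorem swap_right (h : G.IsInduced2K2 a b c d) : G.IsInduced2K2 a b d c :=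
  ⟨h.adj_ab, h.adj_cd.symm, h.not_adj_ad, h.not_adj_ac, h.not_adj_bd, h.not_adj_bc⟩

theorem swap (h : G.IsInduced2K2 a b c d) : G.IsInduced2K2 c d a b :=
  ⟨h.adj_cd, h.adj_ab, fun h' => h.not_adj_ac h'.symm, fun h' => h.not_adj_bc h'.symm,
    fun h' => h.not_adj_ad h'.symm, fun h' => h.not_adj_bd h'.symm⟩

theorem injective (h : G.IsInduced2K2 a b c d) : Function.Injective ![a, b, c, d] := by
  have hab := h.adj_ab.ne
  have hcd := h.adj_cd.ne
  have hac : a ≠ c := by rintro rfl; exact h.not_adj_ad h.adj_cd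
  have had : a ≠ d := by rintro rfl; exact h.not_adj_ac h.adj_cd.symm
  have hbc : b ≠ c := by rintro rfl; exact h.not_adj_bd h.adj_cd
  have hbd : b ≠ d := by rintro rfl; exact h.not_adj_bc h.adj_cd.symm
  intro i j
  fin_cases i <;> fin_cases j <;> simp_all [eq_comm]

theorem adj_or_adj_of_adj_of_adj (h : G.IsInduced2K2 a b c d)
    (hK : ∀ s : Set V, ¬Nonempty (G.induce s ≃g graphK2PlusK3))
    (hva : G.Adj v a) (hvb : G.Adj v b) : G.Adj v c ∨ G.Adj v d := by
  by_contra! hv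
  obtain ⟨s, hs⟩ := exists_induce_iso_graphK2PlusK3 h.adj_cd hva h.adj_ab hvb
    (fun h' => hv.1 h'.symm) (fun h' => h.not_adj_ac h'.symm) (fun h' => h.not_adj_bc h'.symm)
    (fun h' => hv.2 h'.symm) (fun h' => h.not_adj_ad h'.symm) (fun h' => h.not_adj_bd h'.symm)
  exact hK s hs

theorem adj_of_adj_of_not_adj_of_adj (h : G.IsInduced2K2 a b c d)
    (hP : ∀ s : Set V, ¬Nonempty (G.induce s ≃g graphP5))
    (hva : G.Adj v a) (hvb : ¬G.Adj v b) (hvc : G.Adj v c) : G.Adj v d := by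
  by_contra hvd
  obtain ⟨s, hs⟩ := exists_induce_iso_graphP5 h.adj_ab.symm hva.symm hvc h.adj_cd
    (fun h' => hvb h'.symm) h.not_adj_bc h.not_adj_bd h.not_adj_ac h.not_adj_ad hvd
  exact hP s hs

theorem card_adjIndices_ne_two (h : G.IsInduced2K2 a b c d)
    (hP : ∀ s : Set V, ¬Nonempty (G.induce s ≃g graphP5))
    (hK : ∀ s : Set V, ¬Nonempty (G.induce s ≃g graphK2PlusK3)) (v : V) :
    #(G.adjIndices ![a, b, c, d] v) ≠ 2 := by
  have hab := h.adj_or_adj_of_adj_of_adj hK (v := v)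
  have hcd := h.swap.adj_or_adj_of_adj_of_adj hK (v := v)
  have hac := h.adj_of_adj_of_not_adj_of_adj hP (v := v)
  have hbc := h.swap_left.adj_of_adj_of_not_adj_of_adj hP (v := v)
  have had := h.swap_right.adj_of_adj_of_not_adj_of_adj hP (v := v)
  have hbd := h.swap_left.swap_right.adj_of_adj_of_not_adj_of_adj hP (v := v)
  simp only [adjIndices, card_filter, Fin.sum_univ_four, Matrix.cons_val]
  grind

open Classical in
theorem adj_iff_twoK2ExtMatrix (h : G.IsInduced2K2 a b c d) (u v : V) (i j : Fin 6) :
    G.Adj (![u, v, a, b, c, d] i) (![u, v, a, b, c, d] j) ↔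
      twoK2ExtMatrix (G.adjIndices ![a, b, c, d] u) (G.adjIndices ![a, b, c, d] v)
        (G.Adj u v) i j := by
  have := h.adj_ab; have := h.adj_cd; have := h.not_adj_ac; have := h.not_adj_ad
  have := h.not_adj_bc; have := h.not_adj_bd
  fin_cases i <;> fin_cases j <;> simp [twoK2ExtMatrix, adj_comm, *]

open Classical in
theorem rowDegrees_notMem (h : G.IsInduced2K2 a b c d) (hB : BFree G)
    (hu : u ∉ Set.range ![a, b, c, d]) (hv : v ∉ Set.range ![a, b, c, d]) (huv : u ≠ v) :
    rowDegrees (twoK2ExtMatrix (G.adjIndices ![a, b, c, d] u) (G.adjIndices ![a, b, c, d] v)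
      (G.Adj u v)) ∉ BDegSeqs := by
  refine hB.rowDegrees_notMem ?_ (h.adj_iff_twoK2ExtMatrix u v)
  have hu' : u ∉ Set.range ![v, a, b, c, d] := by
    rw [Matrix.range_cons]
    exact fun h' => h'.elim huv hu
  exact Fin.cons_injective_iff.2 ⟨hu', Fin.cons_injective_iff.2 ⟨hv, h.injective⟩⟩

theorem notMem_range_of_adjIndices_eq_empty (h : G.IsInduced2K2 a b c d)
    (hv : G.adjIndices ![a, b, c, d] v = ∅) : v ∉ Set.range ![a, b, c, d] := by
  rintro ⟨i, rfl⟩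
  have hN (j : Fin 4) : ¬G.Adj (![a, b, c, d] i) (![a, b, c, d] j) := fun hj => by
    simpa [hv] using mem_adjIndices.2 hj
  fin_cases i
  exacts [hN 1 h.adj_ab, hN 0 h.adj_ab.symm, hN 3 h.adj_cd, hN 2 h.adj_cd.symm]

theorem not_adj_of_adjIndices_eq_empty (h : G.IsInduced2K2 a b c d) (hB : BFree G)
    (hu : G.adjIndices ![a, b, c, d] u = ∅) (hv : G.adjIndices ![a, b, c, d] v ≠ univ)
    (hv2 : #(G.adjIndices ![a, b, c, d] v) ≠ 2) : ¬G.Adj v u := by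
  classical
  intro hvu
  by_cases hvx : v ∈ Set.range ![a, b, c, d]
  · obtain ⟨i, rfl⟩ := hvx
    simpa [hu] using mem_adjIndices.2 hvu.symm
  · apply h.rowDegrees_notMem hB hvx (h.notMem_range_of_adjIndices_eq_empty hu) hvu.ne
    rw [hu, decide_eq_true hvu]
    exact rowDegrees_twoK2ExtMatrix_empty_mem _ hv2 hv

theorem adj_of_adjIndices_eq_univ (h : G.IsInduced2K2 a b c d) (hB : BFree G)
    (hu : G.adjIndices ![a, b, c, d] u = univ) (hv : G.adjIndices ![a, b, c, d] v ≠ ∅)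
    (hv2 : #(G.adjIndices ![a, b, c, d] v) ≠ 2) (hvu : v ≠ u) : G.Adj v u := by
  classical
  by_contra hnvu
  by_cases hvx : v ∈ Set.range ![a, b, c, d]
  · obtain ⟨i, rfl⟩ := hvx
    exact hnvu (mem_adjIndices.1 (hu ▸ mem_univ i)).symm
  · apply h.rowDegrees_notMem hB hvx (notMem_range_of_adjIndices_eq_univ hu) hvu
    rw [hu, decide_eq_false hnvu]
    exact rowDegrees_twoK2ExtMatrix_univ_mem _ hv2 hv

theorem decomposable (h : G.IsInduced2K2 a b c d) (hB : BFree G)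
    (h2 : ∀ v, #(G.adjIndices ![a, b, c, d] v) ≠ 2)
    (hw : G.adjIndices ![a, b, c, d] w = ∅ ∨ G.adjIndices ![a, b, c, d] w = univ) :
    Decomposable G := by
  set N := G.adjIndices ![a, b, c, d]
  have ha : N a ≠ ∅ := ne_empty_of_mem (a := 1) (mem_adjIndices.2 h.adj_ab)
  have ha' : N a ≠ univ := fun h' => notMem_range_of_adjIndices_eq_univ h' ⟨0, rfl⟩
  have hne : (∅ : Finset (Fin 4)) ≠ univ := by decide
  refine ⟨{v | N v = ∅}, {v | N v = univ}, {v | N v ≠ ∅ ∧ N v ≠ univ},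
    ⟨?_, ?_, ?_, ?_, ?_, ?_, ?_, ?_⟩, ⟨w, hw⟩, ⟨a, ha, ha'⟩⟩
  · ext v
    simp only [Set.mem_union, Set.mem_ofPred_eq, Set.mem_univ, iff_true]
    tauto
  · exact Set.disjoint_left.2 fun v h1 h2 => hne (h1.symm.trans h2)
  · exact Set.disjoint_left.2 fun v h1 h3 => h3.1 h1
  · exact Set.disjoint_left.2 fun v h2 h3 => h3.2 h2
  · exact fun u (hu : N u = ∅) v hv =>
      h.not_adj_of_adjIndices_eq_empty hB hv (fun h' => hne (hu.symm.trans h')) (h2 u)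
  · exact fun u (hu : N u = univ) v hv huv =>
      h.adj_of_adjIndices_eq_univ hB hv (fun h' => hne (h'.symm.trans hu)) (h2 u) huv
  · exact fun v hv u hu =>
      h.adj_of_adjIndices_eq_univ hB hu hv.1 (h2 v) fun hvu => hv.2 (hvu ▸ hu)
  · exact fun v hv u hu => h.not_adj_of_adjIndices_eq_empty hB hu hv.2 (h2 v)

end IsInduced2K2

end SimpleGraph

theorem neighbors_of_induced_2K2_general {V : Type*}
    (H : SimpleGraph V) (hind : Indecomposable H) (hB : BFree H)
    (h5free : ∀ s : Set V, ¬Nonempty (H.induce s ≃g graphC5) ∧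
      ¬Nonempty (H.induce s ≃g graphP5) ∧ ¬Nonempty (H.induce s ≃g graphHouse) ∧
      ¬Nonempty (H.induce s ≃g graphK2PlusK3) ∧ ¬Nonempty (H.induce s ≃g graphK23))
    (a b c d : V)
    (hab : H.Adj a b) (hcd : H.Adj c d)
    (hac : ¬H.Adj a c) (had : ¬H.Adj a d) (hbc : ¬H.Adj b c) (hbd : ¬H.Adj b d) :
    ∀ w : V, w ∉ ({a, b, c, d} : Set V) →
      {x ∈ ({a, b, c, d} : Set V) | H.Adj w x}.ncard = 1 ∨
      {x ∈ ({a, b, c, d} : Set V) | H.Adj w x}.ncard = 3 := by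
  intro w _
  have h : H.IsInduced2K2 a b c d := ⟨hab, hcd, hac, had, hbc, hbd⟩
  have h2 := h.card_adjIndices_ne_two (fun s => (h5free s).2.1) (fun s => (h5free s).2.2.2.1)
  have h0 : H.adjIndices ![a, b, c, d] w ≠ ∅ := fun hw => hind (h.decomposable hB h2 (.inl hw))
  have h4 : H.adjIndices ![a, b, c, d] w ≠ univ := fun hw => hind (h.decomposable hB h2 (.inr hw))
  have hrange : ({a, b, c, d} : Set V) = Set.range ![a, b, c, d] := by
    simp only [Matrix.range_cons, Matrix.range_empty, Set.union_empty, Set.singleton_union]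
  rw [hrange, SimpleGraph.ncard_setOf_adj_mem_range h.injective]
  have hle := card_le_univ (H.adjIndices ![a, b, c, d] w)
  rw [Ne, ← card_eq_zero] at h0
  rw [Ne, ← card_eq_iff_eq_univ] at h4
  simp only [Fintype.card_fin] at h4 hle
  have := h2 w
  omega

/-- in an indecomposable `B`-free graph with no induced `C_5`, `P_5`,
house, `K_2 + K_3`, or `K_{2,3}`, every vertex outside an induced `2K_2`
on `{a,b,c,d}` is adjacent to exactly one or exactly three of `a, b, c, d`. -/
theorem neighbors_of_induced_2K2 {V : Type*} [Fintype V]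
    (H : SimpleGraph V) (hind : Indecomposable H) (hB : BFree H)
    (h5free : ∀ s : Set V, ¬Nonempty (H.induce s ≃g graphC5) ∧
      ¬Nonempty (H.induce s ≃g graphP5) ∧ ¬Nonempty (H.induce s ≃g graphHouse) ∧
      ¬Nonempty (H.induce s ≃g graphK2PlusK3) ∧ ¬Nonempty (H.induce s ≃g graphK23))
    (a b c d : V) (hdist : [a, b, c, d].Pairwise (· ≠ ·))
    (hab : H.Adj a b) (hcd : H.Adj c d)
    (hac : ¬H.Adj a c) (had : ¬H.Adj a d) (hbc : ¬H.Adj b c) (hbd : ¬H.Adj b d) :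
    ∀ w : V, w ∉ ({a, b, c, d} : Set V) →
      {x ∈ ({a, b, c, d} : Set V) | H.Adj w x}.ncard = 1 ∨
      {x ∈ ({a, b, c, d} : Set V) | H.Adj w x}.ncard = 3 :=
  neighbors_of_induced_2K2_general H hind hB h5free a b c d hab hcd hac had hbc hbd
end
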